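/- arXiv:1905.04679 — 2 statements merged into one kernel-verified Lean document; each statement's English description precedes it below -/
import Mathlib

section
/- Let u₁, u₂ : S^n → (0,∞) be smooth functions with W_{u_i} = ∇²u_i + u_i·Id positive definite, let f : S^n → (0,∞) be smooth, c > 0, β > 0, and α > 1 + nβ. If f u_i^{α−1} σ_n(W_{u_i})^{−β} = c on S^n for i = 1,2, then u₁ ≡ u₂. -/
open MeasureTheory Metric Set
open Filter Topology
open scoped RealInnerProductSpace

noncomputable section

abbrev Euc (n : ℕ) := EuclideanSpace ℝ (Fin (n + 1))

variable {n : ℕ}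

/-- 1-homogeneous extension of a function on the unit sphere. -/
def homExt (u : Euc n → ℝ) (y : Euc n) : ℝ := ‖y‖ * u (‖y‖⁻¹ • y)

/-- 0-homogeneous extension. -/
def zeroExt (u : Euc n → ℝ) (y : Euc n) : ℝ := u (‖y‖⁻¹ • y)

/-- Spherical gradient: ambient gradient of the 0-homogeneous extension. -/
def sphGrad (u : Euc n → ℝ) (x : Euc n) : Euc n := gradient (zeroExt u) x

/-- The map `∇²u + u·Id` on the sphere, realized as the ambient Hessian of the
1-homogeneous extension plus the rank-one projection `x ⊗ x`. -/
def Amap (u : Euc n → ℝ) (x : Euc n) : Euc n →L[ℝ] Euc n :=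
  fderiv ℝ (gradient (homExt u)) x + (innerSL ℝ x).smulRight x

/-- `σ_n(W_u) = det(∇²u + u·Id)`. -/
def sigmaN (u : Euc n → ℝ) (x : Euc n) : ℝ := LinearMap.det (Amap u x).toLinearMap

/-- Positive definiteness of `W_u = ∇²u + u·Id` on the sphere (uniform convexity). -/
def WPosDef (u : Euc n → ℝ) : Prop :=
  ∀ x ∈ sphere (0 : Euc n) 1, ∀ v : Euc n, ⟪v, x⟫ = 0 → v ≠ 0 →
    0 < ⟪fderiv ℝ (gradient (homExt u)) x v, v⟫

/-- Total surface measure of the unit sphere `S^n ⊂ ℝ^{n+1}`. -/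
def snMeas (n : ℕ) : ℝ := (μH[(n : ℝ)] (sphere (0 : Euc n) 1)).toReal

open Filter Topology in
open Matrix in
open scoped MatrixOrder in
/-- Loewner monotonicity of the determinant. -/
lemma detMono {m : Type*} [Fintype m] [DecidableEq m] {A B : Matrix m m ℝ}
    (hA : A.PosDef) (hB : B.IsHermitian) (hAB : (B - A).PosSemidef) :
    A.det ≤ B.det := by
  have hAs : A.PosSemidef := hA.posSemidef
  set S : Matrix m m ℝ := CFC.sqrt A with hS
  have hSps : S.PosSemidef := nonneg_iff_posSemidef.mp (CFC.sqrt_nonneg A)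
  have hSS : S * S = A := CFC.sqrt_mul_sqrt_self A (nonneg_iff_posSemidef.mpr hAs)
  have hdetA : 0 < A.det := hA.det_pos
  have hdetS : S.det * S.det = A.det := by rw [← det_mul, hSS]
  have hSdet : S.det ≠ 0 := by
    intro h; rw [h, mul_zero] at hdetS; exact hdetA.ne (hdetS)
  set T : Matrix m m ℝ := S⁻¹ with hT
  have hST : S * T = 1 := mul_nonsing_inv S hSdet.isUnit
  have hTS : T * S = 1 := nonsing_inv_mul S hSdet.isUnit
  have hTherm : T.IsHermitian := hSps.1.inv
  set C : Matrix m m ℝ := T * B * T with hC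
  have hCherm : C.IsHermitian := by
    have : Tᴴ = T := hTherm
    rw [IsHermitian, hC, conjTranspose_mul, conjTranspose_mul, this, hB.eq]; noncomm_ring
  have hTAT : T * A * T = 1 := by
    calc T * A * T = (T * S) * (S * T) := by rw [← hSS]; noncomm_ring
      _ = 1 := by rw [hTS, hST, one_mul]
  have hC1 : C - 1 = T * (B - A) * T := by
    rw [hC, ← hTAT]; noncomm_ring
  have hC1ps : (C - 1).PosSemidef := by
    rw [hC1]
    have := hAB.mul_mul_conjTranspose_same T
    rwa [hTherm.eq] at this
  -- eigenvalues of C are ≥ 1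
  have heig : ∀ i, 1 ≤ hCherm.eigenvalues i := by
    intro i
    have hv := hCherm.mulVec_eigenvectorBasis i
    set v := ⇑(hCherm.eigenvectorBasis i)
    have hvne : v ≠ 0 := by
      have h0 := hCherm.eigenvectorBasis.orthonormal.ne_zero i
      intro h
      exact h0 (by ext j; exact congrFun h j)
    have hps := hC1ps.dotProduct_mulVec_nonneg v
    have hmv : (C - 1) *ᵥ v = (hCherm.eigenvalues i - 1) • v := by
      rw [sub_mulVec, one_mulVec, hv, sub_smul, one_smul]
    rw [hmv, star_trivial, dotProduct_smul, smul_eq_mul] at hps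
    have hvv : 0 < v ⬝ᵥ v := by
      have h1 : 0 ≤ v ⬝ᵥ v := Finset.sum_nonneg fun i _ => mul_self_nonneg _
      rcases h1.lt_or_eq with h | h
      · exact h
      · exact absurd ((dotProduct_self_eq_zero).mp h.symm) hvne
    nlinarith [hps, hvv]
  have hdetC : 1 ≤ C.det := by
    have := hCherm.det_eq_prod_eigenvalues
    rw [this]
    calc (1:ℝ) = ∏ _i : m, 1 := by simp
      _ ≤ ∏ i, hCherm.eigenvalues i :=
        Finset.prod_le_prod (fun i _ => zero_le_one) (fun i _ => heig i)
  have hBSCS : B = S * C * S := by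
    calc B = (S * T) * B * (T * S) := by rw [hST, hTS, one_mul, mul_one]
      _ = S * C * S := by rw [hC]; noncomm_ring
  have h1 : S.det * T.det = 1 := by rw [← det_mul, hST, det_one]
  calc A.det = A.det * 1 := (mul_one _).symm
    _ ≤ A.det * C.det := by exact mul_le_mul_of_nonneg_left hdetC hdetA.le
    _ = (S.det * T.det) * (S.det * T.det) * B.det := by
        rw [← hdetS, hC, det_mul, det_mul]; ring
    _ = B.det := by rw [h1]; ring

section Transfer

variable {F : Type*} [NormedAddCommGroup F] [InnerProductSpace ℝ F]
  {ι : Type*} [Fintype ι] [DecidableEq ι]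

/-- Matrix of a continuous linear map in an orthonormal basis. -/
def matOf (b : OrthonormalBasis ι ℝ F) (A : F →L[ℝ] F) : Matrix ι ι ℝ :=
  LinearMap.toMatrix b.toBasis b.toBasis A.toLinearMap

lemma matOf_apply (b : OrthonormalBasis ι ℝ F) (A : F →L[ℝ] F) (i j : ι) :
    matOf b A i j = ⟪b i, A (b j)⟫ := by
  rw [matOf, LinearMap.toMatrix_apply, OrthonormalBasis.coe_toBasis,
    OrthonormalBasis.coe_toBasis_repr_apply, OrthonormalBasis.repr_apply_apply]
  rfl

lemma matOf_det (b : OrthonormalBasis ι ℝ F) (A : F →L[ℝ] F) :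
    (matOf b A).det = LinearMap.det A.toLinearMap := by
  rw [matOf, ← LinearMap.det_toMatrix b.toBasis]

lemma matOf_dot (b : OrthonormalBasis ι ℝ F) (A : F →L[ℝ] F) (v : F) :
    dotProduct (fun i => b.repr v i) (Matrix.mulVec (matOf b A) (fun i => b.repr v i))
      = ⟪v, A v⟫ := by
  have h1 : Matrix.mulVec (matOf b A) (fun i => b.repr v i) = fun i => b.repr (A v) i := by
    have := LinearMap.toMatrix_mulVec_repr b.toBasis b.toBasis A.toLinearMap v
    convert this using 1 <;> congr 1
  rw [h1, dotProduct]
  simp_rw [OrthonormalBasis.repr_apply_apply]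
  rw [← b.sum_inner_mul_inner v (A v)]
  congr 1; ext i
  rw [real_inner_comm v (b i)]

lemma matOf_isHermitian (b : OrthonormalBasis ι ℝ F) (A : F →L[ℝ] F)
    (hsym : ∀ v w, ⟪A v, w⟫ = ⟪v, A w⟫) : (matOf b A).IsHermitian := by
  ext i j
  rw [Matrix.conjTranspose_apply, star_trivial, matOf_apply, matOf_apply,
    ← hsym (b j) (b i), real_inner_comm]

lemma matOf_posSemidef (b : OrthonormalBasis ι ℝ F) (A : F →L[ℝ] F)
    (hsym : ∀ v w, ⟪A v, w⟫ = ⟪v, A w⟫) (hpos : ∀ v, 0 ≤ ⟪v, A v⟫) :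
    (matOf b A).PosSemidef := by
  refine Matrix.PosSemidef.of_dotProduct_mulVec_nonneg (matOf_isHermitian b A hsym) fun x => ?_
  set v : F := b.repr.symm (WithLp.equiv 2 _ |>.symm x) with hv
  have hx : ∀ i, b.repr v i = x i := by
    intro i; rw [hv]; simp
  have : x = fun i => b.repr v i := by ext i; rw [hx]
  rw [this, star_trivial, matOf_dot]
  exact hpos v

lemma matOf_posDef (b : OrthonormalBasis ι ℝ F) (A : F →L[ℝ] F)
    (hsym : ∀ v w, ⟪A v, w⟫ = ⟪v, A w⟫) (hpos : ∀ v, v ≠ 0 → 0 < ⟪v, A v⟫) :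
    (matOf b A).PosDef := by
  refine Matrix.PosDef.of_dotProduct_mulVec_pos (matOf_isHermitian b A hsym) fun x hx0 => ?_
  set v : F := b.repr.symm (WithLp.equiv 2 _ |>.symm x) with hv
  have hx : ∀ i, b.repr v i = x i := by
    intro i; rw [hv]; simp
  have hxv : x = fun i => b.repr v i := by ext i; rw [hx]
  have hvne : v ≠ 0 := by
    intro h
    apply hx0
    ext i
    rw [← hx i, h]
    simp
  rw [hxv, star_trivial, matOf_dot]
  exact hpos v hvne

end Transfer

section Anal

variable {u : Euc n → ℝ}

lemma homExt_smul (u : Euc n → ℝ) {c : ℝ} (hc : 0 < c) (y : Euc n) :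
    homExt u (c • y) = c * homExt u y := by
  rcases eq_or_ne y 0 with rfl | hy
  · simp [homExt]
  · have hny : ‖y‖ ≠ 0 := norm_ne_zero_iff.mpr hy
    have h1 : ‖c • y‖ = c * ‖y‖ := by
      rw [norm_smul, Real.norm_eq_abs, abs_of_pos hc]
    have h2 : (c * ‖y‖)⁻¹ • (c • y) = ‖y‖⁻¹ • y := by
      rw [smul_smul]
      congr 1
      field_simp
    rw [homExt, homExt, h1, h2]
    ring

lemma homExt_sphere (u : Euc n → ℝ) {x : Euc n} (hx : ‖x‖ = 1) : homExt u x = u x := by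
  rw [homExt, hx]; simp

lemma gradient_def {F : Type*} [NormedAddCommGroup F] [InnerProductSpace ℝ F]
    [CompleteSpace F] (f : F → ℝ) (x : F) :
    gradient f x = (InnerProductSpace.toDual ℝ F).symm (fderiv ℝ f x) := rfl

variable (hsm : ContDiffOn ℝ (⊤ : ℕ∞) (homExt u) {(0 : Euc n)}ᶜ)
include hsm

lemma diffAt (y : Euc n) (hy : y ≠ 0) : DifferentiableAt ℝ (homExt u) y :=
  (hsm.contDiffAt (isOpen_compl_singleton.mem_nhds (by simpa using hy))).differentiableAt (by simp)

lemma contDiffAt' (y : Euc n) (hy : y ≠ 0) : ContDiffAt ℝ (⊤ : ℕ∞) (homExt u) y :=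
  hsm.contDiffAt (isOpen_compl_singleton.mem_nhds (by simpa using hy))

lemma fderiv_smul_invar {c : ℝ} (hc : 0 < c) (y : Euc n) (hy : y ≠ 0) :
    fderiv ℝ (homExt u) (c • y) = fderiv ℝ (homExt u) y := by
  have hcy : c • y ≠ 0 := smul_ne_zero hc.ne' hy
  have h1 : HasFDerivAt (fun z : Euc n => homExt u (c • z))
      ((fderiv ℝ (homExt u) (c • y)).comp (c • ContinuousLinearMap.id ℝ (Euc n))) y := by
    have hin : HasFDerivAt (fun z : Euc n => c • z) (c • ContinuousLinearMap.id ℝ (Euc n)) y :=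
      (hasFDerivAt_id y).const_smul c
    exact ((diffAt hsm (c • y) hcy).hasFDerivAt).comp y hin
  have h2 : HasFDerivAt (fun z : Euc n => homExt u (c • z))
      (c • fderiv ℝ (homExt u) y) y := by
    have := ((diffAt hsm y hy).hasFDerivAt).const_smul c
    have heq : (fun z : Euc n => c • homExt u z) = (fun z : Euc n => homExt u (c • z)) := by
      ext z; rw [homExt_smul u hc z]; simp [smul_eq_mul]
    rw [← heq]; exact this
  have h3 := h1.unique h2
  ext v
  have h4 := congrFun (congrArg DFunLike.coe h3) v
  simp only [ContinuousLinearMap.coe_comp', Function.comp_apply,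
    ContinuousLinearMap.coe_smul', Pi.smul_apply, ContinuousLinearMap.coe_id', id_eq] at h4
  have h5 : fderiv ℝ (homExt u) (c • y) (c • v) = c • (fderiv ℝ (homExt u) y v) := h4
  rw [_root_.map_smul] at h5
  have := smul_right_injective ℝ hc.ne' h5
  exact this

lemma gradient_smul_invar {c : ℝ} (hc : 0 < c) (y : Euc n) (hy : y ≠ 0) :
    gradient (homExt u) (c • y) = gradient (homExt u) y := by
  rw [gradient_def, gradient_def, fderiv_smul_invar hsm hc y hy]

lemma grad_eq_comp :
    gradient (homExt u) =
      (InnerProductSpace.toDual ℝ (Euc n)).symm ∘ (fderiv ℝ (homExt u)) := rfl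

lemma fderiv_diffAt (y : Euc n) (hy : y ≠ 0) :
    DifferentiableAt ℝ (fderiv ℝ (homExt u)) y :=
  ((contDiffAt' hsm y hy).fderiv_right (m := 1) (WithTop.coe_le_coe.mpr le_top)).differentiableAt one_ne_zero

lemma grad_diffAt (y : Euc n) (hy : y ≠ 0) :
    DifferentiableAt ℝ (gradient (homExt u)) y := by
  rw [grad_eq_comp hsm]
  exact ((InnerProductSpace.toDual ℝ (Euc n)).symm.toContinuousLinearEquiv.differentiableAt).comp
    y (fderiv_diffAt hsm y hy)

/-- bridge: the inner product against the derivative of the gradient is the second fderiv. -/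
lemma bridge (y : Euc n) (hy : y ≠ 0) (v w : Euc n) :
    ⟪fderiv ℝ (gradient (homExt u)) y v, w⟫ = fderiv ℝ (fderiv ℝ (homExt u)) y v w := by
  have h1 := LinearIsometryEquiv.comp_fderiv (f := fderiv ℝ (homExt u)) (x := y)
      (InnerProductSpace.toDual ℝ (Euc n)).symm
  have h2 : fderiv ℝ (gradient (homExt u)) y v =
      (InnerProductSpace.toDual ℝ (Euc n)).symm (fderiv ℝ (fderiv ℝ (homExt u)) y v) := by
    rw [grad_eq_comp hsm, h1]; rfl
  rw [h2]
  exact InnerProductSpace.toDual_symm_apply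

lemma snd_symm (y : Euc n) (hy : y ≠ 0) (v w : Euc n) :
    fderiv ℝ (fderiv ℝ (homExt u)) y v w = fderiv ℝ (fderiv ℝ (homExt u)) y w v :=
  ((contDiffAt' hsm y hy).isSymmSndFDerivAt (by rw [minSmoothness_of_isRCLikeNormedField]; exact WithTop.coe_le_coe.mpr le_top)).eq v w

lemma hess_symm (y : Euc n) (hy : y ≠ 0) (v w : Euc n) :
    ⟪fderiv ℝ (gradient (homExt u)) y v, w⟫ = ⟪v, fderiv ℝ (gradient (homExt u)) y w⟫ := by
  rw [bridge hsm y hy v w, snd_symm hsm y hy v w, ← bridge hsm y hy w v, real_inner_comm]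

/-- Euler's identity: the Hessian of the 1-homogeneous extension kills the radial direction. -/
lemma euler (x : Euc n) (hx : ‖x‖ = 1) :
    fderiv ℝ (gradient (homExt u)) x x = 0 := by
  have hx0 : x ≠ 0 := by intro h; rw [h] at hx; simp at hx
  set G := gradient (homExt u) with hG
  have hdG : DifferentiableAt ℝ G x := grad_diffAt hsm x hx0
  have hφ : HasDerivAt (fun s : ℝ => s • x) x 1 := by
    simpa using (hasDerivAt_id (1:ℝ)).smul_const x
  have hcomp : HasDerivAt (fun s : ℝ => G (s • x)) (fderiv ℝ G x x) 1 := by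
    have h1x : HasFDerivAt G (fderiv ℝ G x) ((1:ℝ) • x) := by
      rw [one_smul]; exact hdG.hasFDerivAt
    exact h1x.comp_hasDerivAt 1 hφ
  have hev : (fun s : ℝ => G (s • x)) =ᶠ[nhds 1] (fun _ => G x) := by
    have hpos : ∀ᶠ s : ℝ in nhds 1, s ∈ Ioi (0:ℝ) :=
      isOpen_Ioi.eventually_mem (by norm_num)
    filter_upwards [hpos] with s hs
    exact gradient_smul_invar hsm hs x hx0
  have hconst : HasDerivAt (fun _ : ℝ => G x) (fderiv ℝ G x x) 1 :=
    hcomp.congr_of_eventuallyEq hev.symm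
  have := hconst.unique (hasDerivAt_const 1 (G x))
  exact this

end Anal

open Filter Topology in
/-- Second derivative test at an interior local minimum (one-dimensional). -/
lemma secondDerivTest {g dg : ℝ → ℝ} {L : ℝ}
    (hd : ∀ᶠ s in 𝓝 (0:ℝ), HasDerivAt g (dg s) s)
    (hd2 : HasDerivAt dg L 0)
    (hmin : IsLocalMin g 0) : 0 ≤ L := by
  by_contra hL
  push_neg at hL
  have hdg0 : dg 0 = 0 := hmin.hasDerivAt_eq_zero hd.self_of_nhds
  -- dg is negative just to the right of 0
  have hslope : Tendsto (slope dg 0) (𝓝[≠] (0:ℝ)) (𝓝 L) :=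
    hasDerivAt_iff_tendsto_slope.mp hd2
  have hslope' : ∀ᶠ s in 𝓝[>] (0:ℝ), slope dg 0 s < 0 := by
    have : ∀ᶠ s in 𝓝[≠] (0:ℝ), slope dg 0 s < 0 :=
      hslope.eventually (Filter.Tendsto.eventually_lt_const hL tendsto_id) |>.mono (fun s hs => hs)
    exact nhdsWithin_mono 0 (fun s hs => ne_of_gt hs) this
  have hneg : ∀ᶠ s in 𝓝[>] (0:ℝ), dg s < 0 := by
    filter_upwards [hslope', self_mem_nhdsWithin] with s hs1 hs2
    have hs2' : (0:ℝ) < s := hs2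
    have : slope dg 0 s = dg s / s := by
      rw [slope_def_field]; simp [hdg0]
    rw [this] at hs1
    rcases div_neg_iff.mp hs1 with h | h
    · linarith [h.2]
    · exact h.1
  obtain ⟨δ₂, hδ₂, hsub⟩ := mem_nhdsGT_iff_exists_Ioo_subset.mp hneg
  obtain ⟨δ₁, hδ₁, h₁⟩ := Metric.eventually_nhds_iff.mp (hd.and hmin)
  set ε : ℝ := min (δ₁ / 2) (δ₂ / 2) with hε
  have hδ₂pos : 0 < δ₂ := hδ₂
  have hεpos : 0 < ε := lt_min (by linarith) (by linarith)
  have hanti : StrictAntiOn g (Icc 0 ε) := by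
    apply strictAntiOn_of_deriv_neg (convex_Icc 0 ε)
    · intro s hs
      have hsd : dist s 0 < δ₁ := by
        rw [Real.dist_eq, sub_zero, abs_of_nonneg hs.1]
        have := hs.2
        have h2 : ε ≤ δ₁ / 2 := min_le_left _ _
        linarith
      exact ((h₁ hsd).1.differentiableAt).continuousAt.continuousWithinAt
    · intro s hs
      rw [interior_Icc] at hs
      have hsd : dist s 0 < δ₁ := by
        rw [Real.dist_eq, sub_zero, abs_of_pos hs.1]
        have h2 : ε ≤ δ₁ / 2 := min_le_left _ _
        linarith [hs.2]
      rw [(h₁ hsd).1.deriv]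
      apply hsub
      constructor
      · exact hs.1
      · have h2 : ε ≤ δ₂ / 2 := min_le_right _ _
        linarith [hs.2]
  have hlt : g ε < g 0 := hanti (by constructor <;> [rfl; exact hεpos.le]) (by
      constructor <;> [exact hεpos.le; rfl]) hεpos
  have hge : g 0 ≤ g ε := by
    have hsd : dist ε 0 < δ₁ := by
      rw [Real.dist_eq, sub_zero, abs_of_pos hεpos]
      have h2 : ε ≤ δ₁ / 2 := min_le_left _ _
      linarith
    exact (h₁ hsd).2
  linarith

lemma exists_adapted_basis {x₀ : Euc n} (hx : ‖x₀‖ = 1) :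
    ∃ b : OrthonormalBasis (Fin (n+1)) ℝ (Euc n), b 0 = x₀ := by
  have hcard : Module.finrank ℝ (Euc n) = Fintype.card (Fin (n+1)) := by
    simp [finrank_euclideanSpace]
  have hon : Orthonormal ℝ (({0} : Set (Fin (n+1))).restrict (fun _ => x₀)) := by
    constructor
    · intro i; exact hx
    · intro i j hij
      exfalso
      apply hij
      have hi := i.2
      have hj := j.2
      simp only [Set.mem_singleton_iff] at hi hj
      exact Subtype.ext (hi.trans hj.symm)
  obtain ⟨b, hb⟩ := Orthonormal.exists_orthonormalBasis_extension_of_card_eq hcard hon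
  exact ⟨b, hb 0 rfl⟩

lemma amap_posdef {u : Euc n → ℝ} (hsm : ContDiffOn ℝ (⊤ : ℕ∞) (homExt u) {(0 : Euc n)}ᶜ)
    (hcvx : WPosDef u) {x₀ : Euc n} (hx : ‖x₀‖ = 1) :
    ∀ v : Euc n, v ≠ 0 → 0 < ⟪v, Amap u x₀ v⟫ := by
  intro v hv
  have hx0 : x₀ ≠ 0 := fun h => by rw [h] at hx; simp at hx
  have hxS : x₀ ∈ sphere (0 : Euc n) 1 := by simpa [mem_sphere_zero_iff_norm] using hx
  set H := fderiv ℝ (gradient (homExt u)) x₀ with hH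
  have hE : H x₀ = 0 := euler hsm x₀ hx
  have hxx : ⟪x₀, x₀⟫ = 1 := by
    rw [real_inner_self_eq_norm_sq, hx]; norm_num
  set a := ⟪x₀, v⟫ with ha
  set vT := v - a • x₀ with hvT
  have hvTperp : ⟪vT, x₀⟫ = 0 := by
    rw [hvT, inner_sub_left, real_inner_smul_left, hxx, mul_one, real_inner_comm, sub_self]
  have hvsum : v = vT + a • x₀ := by rw [hvT]; abel
  have hHv : H v = H vT := by
    conv_lhs => rw [hvsum]
    rw [map_add, _root_.map_smul, hE, smul_zero, add_zero]
  have hA : Amap u x₀ v = H v + a • x₀ := by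
    simp only [Amap, ContinuousLinearMap.add_apply, ContinuousLinearMap.smulRight_apply,
      innerSL_apply_apply, ← hH, ← ha]
  have hvx : ⟪v, x₀⟫ = a := real_inner_comm x₀ v
  have h1 : ⟪v, H vT⟫ = ⟪vT, H vT⟫ := by
    conv_lhs => rw [hvsum]
    rw [inner_add_left, real_inner_smul_left]
    have h2 : ⟪x₀, H vT⟫ = 0 := by
      rw [← hess_symm hsm x₀ hx0 x₀ vT, hE, inner_zero_left]
    rw [h2, mul_zero, add_zero]
  have hinner : ⟪v, Amap u x₀ v⟫ = ⟪vT, H vT⟫ + a ^ 2 := by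
    rw [hA, hHv, inner_add_right, real_inner_smul_right, hvx, h1]
    ring
  rw [hinner]
  rcases eq_or_ne vT 0 with hT0 | hTne
  · have hane : a ≠ 0 := by
      intro h0
      apply hv
      rw [hvsum, hT0, h0, zero_smul, add_zero]
    rw [hT0]
    simp only [map_zero, inner_zero_left, inner_zero_right]
    have : 0 < a ^ 2 := by positivity
    linarith
  · have h3 : 0 < ⟪H vT, vT⟫ := hcvx x₀ hxS vT hvTperp hTne
    rw [real_inner_comm vT (H vT)] at *
    nlinarith [sq_nonneg a]

section DetR

variable {x₀ : Euc n} (hx : ‖x₀‖ = 1)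

lemma Pmap_apply (v : Euc n) : (innerSL ℝ x₀).smulRight x₀ v = ⟪x₀, v⟫ • x₀ := rfl

include hx in
lemma detR (t : ℝ) :
    LinearMap.det ((t • ContinuousLinearMap.id ℝ (Euc n)
      + (1 - t) • (innerSL ℝ x₀).smulRight x₀ : Euc n →L[ℝ] Euc n)).toLinearMap = t ^ n := by
  obtain ⟨b, hb0⟩ := exists_adapted_basis hx
  set R : Euc n →L[ℝ] Euc n :=
    t • ContinuousLinearMap.id ℝ (Euc n) + (1 - t) • (innerSL ℝ x₀).smulRight x₀ with hR
  have hbij : ∀ i j, ⟪b i, b j⟫ = if i = j then (1:ℝ) else 0 :=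
    fun i j => orthonormal_iff_ite.mp b.orthonormal i j
  have hMR : matOf b R = Matrix.diagonal (fun i => if i = 0 then (1:ℝ) else t) := by
    ext i j
    rw [matOf_apply]
    have hRbj : R (b j) = t • b j + ((1 - t) * ⟪x₀, b j⟫) • x₀ := by
      rw [hR]
      simp only [ContinuousLinearMap.add_apply, ContinuousLinearMap.smul_apply,
        ContinuousLinearMap.id_apply, Pmap_apply, smul_smul]
    rw [hRbj, inner_add_right, real_inner_smul_right, real_inner_smul_right]
    rw [← hb0, hbij, hbij, hbij, Matrix.diagonal_apply]
    by_cases hij : i = j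
    · subst hij
      by_cases hi0 : i = 0
      · subst hi0; simp
      · have h1 : (0 : Fin (n+1)) ≠ i := fun h => hi0 h.symm
        simp [hi0, h1]
    · have hij' : j ≠ i := fun h => hij h.symm
      by_cases hj0 : j = 0
      · subst hj0
        have hi0 : i ≠ 0 := fun h => hij (h.trans rfl)
        have h1 : (0:Fin (n+1)) ≠ i := fun h => hi0 h.symm
        simp [hij, h1]
      · have h2 : (0 : Fin (n+1)) ≠ j := fun h => hj0 h.symm
        simp [hij, h2]
  have hdet := matOf_det b R
  rw [hMR] at hdet
  rw [← hdet, Matrix.det_diagonal, Fin.prod_univ_succ]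
  simp [Fin.succ_ne_zero]

end DetR

set_option maxHeartbeats 1000000 in
lemma one_sided (u₁ u₂ f : Euc n → ℝ) (α β c : ℝ)
    (hβ : 0 < β) (hα : 1 + (n : ℝ) * β < α)
    (h1pos : ∀ x ∈ sphere (0 : Euc n) 1, 0 < u₁ x)
    (h2pos : ∀ x ∈ sphere (0 : Euc n) 1, 0 < u₂ x)
    (hfpos : ∀ x ∈ sphere (0 : Euc n) 1, 0 < f x)
    (h1sm : ContDiffOn ℝ (⊤ : ℕ∞) (homExt u₁) {(0 : Euc n)}ᶜ)
    (h2sm : ContDiffOn ℝ (⊤ : ℕ∞) (homExt u₂) {(0 : Euc n)}ᶜ)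
    (h1cvx : WPosDef u₁) (h2cvx : WPosDef u₂)
    (heq1 : ∀ x ∈ sphere (0 : Euc n) 1, f x * u₁ x ^ (α - 1) * sigmaN u₁ x ^ (-β) = c)
    (heq2 : ∀ x ∈ sphere (0 : Euc n) 1, f x * u₂ x ^ (α - 1) * sigmaN u₂ x ^ (-β) = c) :
    ∀ x ∈ sphere (0 : Euc n) 1, u₁ x ≤ u₂ x := by
  have hnorm : ∀ x ∈ sphere (0:Euc n) 1, ‖x‖ = 1 := fun x hx => mem_sphere_zero_iff_norm.mp hx
  have hsub : sphere (0 : Euc n) 1 ⊆ {(0 : Euc n)}ᶜ := by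
    intro x hx h0
    rw [mem_singleton_iff] at h0
    have := hnorm x hx
    rw [h0] at this; simp at this
  -- maximum of the ratio
  have hcont : ContinuousOn (fun x => homExt u₁ x / homExt u₂ x) (sphere (0:Euc n) 1) := by
    apply ContinuousOn.div ((h1sm.continuousOn).mono hsub) ((h2sm.continuousOn).mono hsub)
    intro x hx
    rw [homExt_sphere u₂ (hnorm x hx)]
    exact (h2pos x hx).ne'
  have hnonempty : (sphere (0:Euc n) 1).Nonempty := NormedSpace.sphere_nonempty.mpr zero_le_one
  obtain ⟨x₀, hx₀S, hmax⟩ := (isCompact_sphere (0:Euc n) 1).exists_isMaxOn hnonempty hcont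
  have hx₀ : ‖x₀‖ = 1 := hnorm x₀ hx₀S
  have hx₀ne : x₀ ≠ 0 := fun h => by rw [h] at hx₀; simp at hx₀
  set t : ℝ := u₁ x₀ / u₂ x₀ with htdef
  have h2x₀ : 0 < u₂ x₀ := h2pos x₀ hx₀S
  have h1x₀ : 0 < u₁ x₀ := h1pos x₀ hx₀S
  have ht : 0 < t := div_pos h1x₀ h2x₀
  have hu1x₀ : u₁ x₀ = t * u₂ x₀ := by rw [htdef, div_mul_cancel₀ _ h2x₀.ne']
  have hratio : ∀ z ∈ sphere (0:Euc n) 1, u₁ z ≤ t * u₂ z := by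
    intro z hz
    have h1 := hmax hz
    simp only [Set.mem_setOf_eq] at h1
    rw [homExt_sphere u₁ (hnorm z hz), homExt_sphere u₂ (hnorm z hz),
      homExt_sphere u₁ hx₀, homExt_sphere u₂ hx₀] at h1
    calc u₁ z = (u₁ z / u₂ z) * u₂ z := (div_mul_cancel₀ _ (h2pos z hz).ne').symm
      _ ≤ t * u₂ z := mul_le_mul_of_nonneg_right h1 (h2pos z hz).le
  -- local minimum of w at x₀
  set w : Euc n → ℝ := fun y => t * homExt u₂ y - homExt u₁ y with hw
  have hwx₀ : w x₀ = 0 := by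
    rw [hw]; simp only
    rw [homExt_sphere u₂ hx₀, homExt_sphere u₁ hx₀, ← hu1x₀]; ring
  have hne0 : ∀ᶠ y in 𝓝 x₀, y ≠ (0 : Euc n) := by
    have h1 := isOpen_compl_singleton.eventually_mem
      (show x₀ ∈ {(0:Euc n)}ᶜ by simpa using hx₀ne)
    filter_upwards [h1] with y hy
    simpa using hy
  have hminw : IsLocalMin w x₀ := by
    have h2 : ∀ᶠ y in 𝓝 x₀, w x₀ ≤ w y := by
      filter_upwards [hne0] with y hy
      rw [hwx₀]
      have hyn : ‖y‖ ≠ 0 := norm_ne_zero_iff.mpr hy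
      have hyS : ‖y‖⁻¹ • y ∈ sphere (0:Euc n) 1 := by
        rw [mem_sphere_zero_iff_norm, norm_smul, norm_inv, norm_norm, inv_mul_cancel₀ hyn]
      have h1 : w y = ‖y‖ * (t * u₂ (‖y‖⁻¹ • y) - u₁ (‖y‖⁻¹ • y)) := by
        rw [hw]; simp only [homExt]; ring
      rw [h1]
      have h3 := hratio _ hyS
      have h4 := norm_nonneg y
      nlinarith
    exact h2
  -- Hessian comparison
  set H₁ := fderiv ℝ (gradient (homExt u₁)) x₀ with hH₁
  set H₂ := fderiv ℝ (gradient (homExt u₂)) x₀ with hH₂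
  have hwdiff : ∀ y : Euc n, y ≠ 0 → DifferentiableAt ℝ w y := fun y hy =>
    ((diffAt h2sm y hy).const_mul t).sub (diffAt h1sm y hy)
  have hQ : ∀ v : Euc n, ⟪v, H₁ v⟫ ≤ t * ⟪v, H₂ v⟫ := by
    intro v
    set φ : ℝ → Euc n := fun s => x₀ + s • v with hφ
    have hφ0 : φ 0 = x₀ := by rw [hφ]; simp
    have hφd : ∀ s, HasDerivAt φ v s := by
      intro s
      simpa [hφ] using ((hasDerivAt_id s).smul_const v).const_add x₀
    have hφcont : Continuous φ := by fun_prop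
    have hφtend : Tendsto φ (𝓝 0) (𝓝 x₀) := by
      rw [← hφ0]; exact hφcont.tendsto 0
    have hφne : ∀ᶠ s in 𝓝 (0:ℝ), φ s ≠ 0 := hφtend.eventually hne0
    set g : ℝ → ℝ := fun s => w (φ s) with hg
    have hgmin : IsLocalMin g 0 := by
      have h2 : ∀ᶠ s in 𝓝 (0:ℝ), g 0 ≤ g s := by
        have h3 := hφtend.eventually hminw
        filter_upwards [h3] with s hs
        rw [hg]; simp only
        rw [hφ0]
        exact hs
      exact h2
    set dg : ℝ → ℝ := fun s => fderiv ℝ w (φ s) v with hdg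
    have hd : ∀ᶠ s in 𝓝 (0:ℝ), HasDerivAt g (dg s) s := by
      filter_upwards [hφne] with s hs
      have h1 := ((hwdiff _ hs).hasFDerivAt).comp_hasDerivAt s (hφd s)
      exact h1
    set F₁ := fderiv ℝ (homExt u₁) with hF₁
    set F₂ := fderiv ℝ (homExt u₂) with hF₂
    have hfw : dg =ᶠ[𝓝 (0:ℝ)] fun s => t * (F₂ (φ s) v) - F₁ (φ s) v := by
      filter_upwards [hφne] with s hs
      have h1 : fderiv ℝ w (φ s) = t • F₂ (φ s) - F₁ (φ s) := by
        rw [hw, hF₁, hF₂]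
        rw [fderiv_fun_sub ((diffAt h2sm _ hs).const_mul t) (diffAt h1sm _ hs),
          fderiv_const_mul (diffAt h2sm _ hs) t]
      rw [hdg]; simp only [h1]
      simp [ContinuousLinearMap.sub_apply]
    have hψ : ∀ (uu : Euc n → ℝ), ContDiffOn ℝ (⊤ : ℕ∞) (homExt uu) {(0:Euc n)}ᶜ →
        HasDerivAt (fun s => fderiv ℝ (homExt uu) (φ s) v)
          (fderiv ℝ (fderiv ℝ (homExt uu)) x₀ v v) 0 := by
      intro uu hsmu
      have h1 : HasFDerivAt (fderiv ℝ (homExt uu)) (fderiv ℝ (fderiv ℝ (homExt uu)) x₀) (φ 0) := by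
        rw [hφ0]
        exact (fderiv_diffAt hsmu x₀ hx₀ne).hasFDerivAt
      have h2 : HasDerivAt (fun s => fderiv ℝ (homExt uu) (φ s))
          (fderiv ℝ (fderiv ℝ (homExt uu)) x₀ v) 0 := h1.comp_hasDerivAt 0 (hφd 0)
      have h3 := h2.clm_apply (hasDerivAt_const (0:ℝ) v)
      simpa using h3
    have hr : HasDerivAt (fun s => t * (F₂ (φ s) v) - F₁ (φ s) v)
        (t * (fderiv ℝ F₂ x₀ v v) - fderiv ℝ F₁ x₀ v v) 0 :=
      ((hψ u₂ h2sm).const_mul t).sub (hψ u₁ h1sm)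
    have hd2 : HasDerivAt dg (t * (fderiv ℝ F₂ x₀ v v) - fderiv ℝ F₁ x₀ v v) 0 :=
      hr.congr_of_eventuallyEq hfw
    have hL := secondDerivTest hd hd2 hgmin
    have hb1 : fderiv ℝ F₁ x₀ v v = ⟪H₁ v, v⟫ := (bridge h1sm x₀ hx₀ne v v).symm
    have hb2 : fderiv ℝ F₂ x₀ v v = ⟪H₂ v, v⟫ := (bridge h2sm x₀ hx₀ne v v).symm
    rw [hb1, hb2] at hL
    rw [real_inner_comm (H₁ v) v, real_inner_comm (H₂ v) v]
    linarith
  -- operators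
  set P : Euc n →L[ℝ] Euc n := (innerSL ℝ x₀).smulRight x₀ with hPdef
  set A₁ : Euc n →L[ℝ] Euc n := Amap u₁ x₀ with hA₁def
  set A₂ : Euc n →L[ℝ] Euc n := Amap u₂ x₀ with hA₂def
  set D : Euc n →L[ℝ] Euc n := t • H₂ + P with hDdef
  set R : Euc n →L[ℝ] Euc n := t • ContinuousLinearMap.id ℝ (Euc n) + (1 - t) • P with hRdef
  have hPapp : ∀ v : Euc n, P v = ⟪x₀, v⟫ • x₀ := fun v => rfl
  have hxx : ⟪x₀, x₀⟫ = 1 := by rw [real_inner_self_eq_norm_sq, hx₀]; norm_num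
  have hE₁ : H₁ x₀ = 0 := euler h1sm x₀ hx₀
  have hE₂ : H₂ x₀ = 0 := euler h2sm x₀ hx₀
  have hfact : A₂.comp R = D := by
    refine ContinuousLinearMap.ext fun v => ?_
    have hz : R v = t • v + ((1 - t) * ⟪x₀, v⟫) • x₀ := by
      rw [hRdef]
      simp only [ContinuousLinearMap.add_apply, ContinuousLinearMap.smul_apply,
        ContinuousLinearMap.id_apply, hPapp, smul_smul]
    have h1 : H₂ (R v) = t • H₂ v := by
      rw [hz, map_add, _root_.map_smul, _root_.map_smul, hE₂, smul_zero, add_zero]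
    have h2 : P (R v) = P v := by
      rw [hPapp, hPapp, hz, inner_add_right, real_inner_smul_right, real_inner_smul_right, hxx]
      congr 1
      ring
    show (H₂ + P) (R v) = (t • H₂ + P) v
    rw [ContinuousLinearMap.add_apply H₂ P, h1, h2, ContinuousLinearMap.add_apply,
      ContinuousLinearMap.smul_apply]
  -- symmetry
  have hsymH₁ : ∀ v w' : Euc n, ⟪H₁ v, w'⟫ = ⟪v, H₁ w'⟫ := fun v w' =>
    hess_symm h1sm x₀ hx₀ne v w'
  have hsymH₂ : ∀ v w' : Euc n, ⟪H₂ v, w'⟫ = ⟪v, H₂ w'⟫ := fun v w' =>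
    hess_symm h2sm x₀ hx₀ne v w'
  have hsymP : ∀ v w' : Euc n, ⟪P v, w'⟫ = ⟪v, P w'⟫ := by
    intro v w'
    rw [hPapp, hPapp, real_inner_smul_left, real_inner_smul_right, real_inner_comm x₀ v]
    ring
  have hsymA₁ : ∀ v w' : Euc n, ⟪A₁ v, w'⟫ = ⟪v, A₁ w'⟫ := by
    intro v w'
    show ⟪(H₁ + P) v, w'⟫ = ⟪v, (H₁ + P) w'⟫
    rw [ContinuousLinearMap.add_apply, ContinuousLinearMap.add_apply,
      inner_add_left, inner_add_right, hsymH₁, hsymP]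
  have hsymA₂ : ∀ v w' : Euc n, ⟪A₂ v, w'⟫ = ⟪v, A₂ w'⟫ := by
    intro v w'
    show ⟪(H₂ + P) v, w'⟫ = ⟪v, (H₂ + P) w'⟫
    rw [ContinuousLinearMap.add_apply, ContinuousLinearMap.add_apply,
      inner_add_left, inner_add_right, hsymH₂, hsymP]
  have hsymD : ∀ v w' : Euc n, ⟪D v, w'⟫ = ⟪v, D w'⟫ := by
    intro v w'
    rw [hDdef]
    simp only [ContinuousLinearMap.add_apply, ContinuousLinearMap.smul_apply]
    rw [inner_add_left, inner_add_right, real_inner_smul_left, real_inner_smul_right,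
      hsymH₂, hsymP]
  have hsymDA : ∀ v w' : Euc n, ⟪(D - A₁) v, w'⟫ = ⟪v, (D - A₁) w'⟫ := by
    intro v w'
    simp only [ContinuousLinearMap.sub_apply]
    rw [inner_sub_left, inner_sub_right, hsymD, hsymA₁]
  -- matrices
  obtain ⟨b, hb0⟩ := exists_adapted_basis hx₀
  have hM₁pd : (matOf b A₁).PosDef := matOf_posDef b A₁ hsymA₁ (amap_posdef h1sm h1cvx hx₀)
  have hM₂pd : (matOf b A₂).PosDef := matOf_posDef b A₂ hsymA₂ (amap_posdef h2sm h2cvx hx₀)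
  have hMDh : (matOf b D).IsHermitian := matOf_isHermitian b D hsymD
  have hQop : ∀ v : Euc n, 0 ≤ ⟪v, (D - A₁) v⟫ := by
    intro v
    have h1 : (D - A₁) v = t • H₂ v - H₁ v := by
      show (t • H₂ + P - (H₁ + P)) v = t • H₂ v - H₁ v
      simp only [ContinuousLinearMap.sub_apply, ContinuousLinearMap.add_apply,
        ContinuousLinearMap.smul_apply]
      abel
    rw [h1, inner_sub_right, real_inner_smul_right]
    have h2 := hQ v
    linarith
  have hMsub : matOf b D - matOf b A₁ = matOf b (D - A₁) := by
    ext i j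
    rw [Matrix.sub_apply, matOf_apply, matOf_apply, matOf_apply,
      ContinuousLinearMap.sub_apply, inner_sub_right]
  have hQm : (matOf b D - matOf b A₁).PosSemidef := by
    rw [hMsub]
    exact matOf_posSemidef b _ hsymDA hQop
  have hdet1 : (matOf b A₁).det ≤ (matOf b D).det := detMono hM₁pd hMDh hQm
  have hσ₁ : sigmaN u₁ x₀ = (matOf b A₁).det := (matOf_det b A₁).symm
  have hσ₂ : sigmaN u₂ x₀ = (matOf b A₂).det := (matOf_det b A₂).symm
  have hdetD : (matOf b D).det = sigmaN u₂ x₀ * t ^ n := by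
    rw [matOf_det b D, ← hfact, ContinuousLinearMap.toLinearMap_comp, LinearMap.det_comp]
    have h1 := detR hx₀ t
    rw [← hPdef] at h1
    rw [← hRdef] at h1
    rw [h1, hσ₂, matOf_det b A₂]
  have hσ₁pos : 0 < sigmaN u₁ x₀ := by rw [hσ₁]; exact hM₁pd.det_pos
  have hσ₂pos : 0 < sigmaN u₂ x₀ := by rw [hσ₂]; exact hM₂pd.det_pos
  have hkey : sigmaN u₁ x₀ ≤ sigmaN u₂ x₀ * t ^ n := by
    rw [hσ₁, ← hdetD]; exact hdet1
  -- final algebra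
  have he1 := heq1 x₀ hx₀S
  have he2 := heq2 x₀ hx₀S
  have hf₀ : 0 < f x₀ := hfpos x₀ hx₀S
  have heqq : u₁ x₀ ^ (α-1) * sigmaN u₁ x₀ ^ (-β) = u₂ x₀ ^ (α-1) * sigmaN u₂ x₀ ^ (-β) := by
    have h1 := he1.trans he2.symm
    rw [mul_assoc, mul_assoc] at h1
    exact mul_left_cancel₀ hf₀.ne' h1
  have ht1 : t ≤ 1 := by
    by_contra hgt
    push_neg at hgt
    have hu2p : 0 < u₂ x₀ ^ (α-1) := Real.rpow_pos_of_pos h2x₀ _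
    have h2 : t ^ (α-1) * sigmaN u₁ x₀ ^ (-β) = sigmaN u₂ x₀ ^ (-β) := by
      have h1 : u₂ x₀ ^ (α-1) * (t ^ (α-1) * sigmaN u₁ x₀ ^ (-β))
          = u₂ x₀ ^ (α-1) * sigmaN u₂ x₀ ^ (-β) := by
        rw [← heqq, hu1x₀, Real.mul_rpow ht.le h2x₀.le]; ring
      exact mul_left_cancel₀ hu2p.ne' h1
    have h4 : (sigmaN u₂ x₀ * t ^ n) ^ (-β) ≤ sigmaN u₁ x₀ ^ (-β) :=
      Real.rpow_le_rpow_of_nonpos hσ₁pos hkey (by linarith)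
    have htn : (0:ℝ) < t ^ n := pow_pos ht n
    have h5 : (sigmaN u₂ x₀ * t ^ n) ^ (-β) = sigmaN u₂ x₀ ^ (-β) * (t ^ n) ^ (-β) :=
      Real.mul_rpow hσ₂pos.le htn.le
    have h6 : ((t:ℝ) ^ (n:ℕ)) ^ (-β) = t ^ (-((n:ℝ)*β)) := by
      rw [← Real.rpow_natCast t n, ← Real.rpow_mul ht.le, mul_neg]
    have hσ₂β : 0 < sigmaN u₂ x₀ ^ (-β) := Real.rpow_pos_of_pos hσ₂pos _
    have htα : 0 < t ^ (α-1) := Real.rpow_pos_of_pos ht _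
    have h7 : t ^ (α-1) * (sigmaN u₂ x₀ ^ (-β) * t ^ (-((n:ℝ)*β))) ≤ sigmaN u₂ x₀ ^ (-β) := by
      calc t ^ (α-1) * (sigmaN u₂ x₀ ^ (-β) * t ^ (-((n:ℝ)*β)))
          = t ^ (α-1) * ((sigmaN u₂ x₀ * t ^ n) ^ (-β)) := by rw [h5, h6]
        _ ≤ t ^ (α-1) * sigmaN u₁ x₀ ^ (-β) := mul_le_mul_of_nonneg_left h4 htα.le
        _ = sigmaN u₂ x₀ ^ (-β) := h2
    have h8' : t ^ (α-1) * t ^ (-((n:ℝ)*β)) ≤ 1 := by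
      rw [← mul_le_mul_iff_left₀ hσ₂β]
      calc t ^ (α-1) * t ^ (-((n:ℝ)*β)) * sigmaN u₂ x₀ ^ (-β)
          = t ^ (α-1) * (sigmaN u₂ x₀ ^ (-β) * t ^ (-((n:ℝ)*β))) := by ring
        _ ≤ sigmaN u₂ x₀ ^ (-β) := h7
        _ = 1 * sigmaN u₂ x₀ ^ (-β) := (one_mul _).symm
    have h8 : t ^ (α - 1 + -((n:ℝ)*β)) ≤ 1 := by
      rw [Real.rpow_add ht]; exact h8'
    have h9 : 1 < t ^ (α - 1 + -((n:ℝ)*β)) :=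
      (Real.one_lt_rpow_iff_of_pos ht).mpr (Or.inl ⟨hgt, by linarith⟩)
    linarith
  intro x hxS
  have h1 := hratio x hxS
  nlinarith [h2pos x hxS, ht1]

/-- uniqueness of positive uniformly convex solutions of
`f u^{α−1} σ_n(W_u)^{−β} = c` on `S^n` for `α > 1 + nβ`, `β > 0`. -/
theorem stmt10 (n : ℕ) (hn : 2 ≤ n)
    (u₁ u₂ f : Euc n → ℝ) (α β c : ℝ)
    (hβ : 0 < β) (hα : 1 + (n : ℝ) * β < α) (hc : 0 < c)
    (h1pos : ∀ x ∈ sphere (0 : Euc n) 1, 0 < u₁ x)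
    (h2pos : ∀ x ∈ sphere (0 : Euc n) 1, 0 < u₂ x)
    (hfpos : ∀ x ∈ sphere (0 : Euc n) 1, 0 < f x)
    (h1sm : ContDiffOn ℝ (⊤ : ℕ∞) (homExt u₁) {(0 : Euc n)}ᶜ)
    (h2sm : ContDiffOn ℝ (⊤ : ℕ∞) (homExt u₂) {(0 : Euc n)}ᶜ)
    (hfsm : ContDiffOn ℝ (⊤ : ℕ∞) (zeroExt f) {(0 : Euc n)}ᶜ)
    (h1cvx : WPosDef u₁) (h2cvx : WPosDef u₂)
    (heq1 : ∀ x ∈ sphere (0 : Euc n) 1,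
      f x * u₁ x ^ (α - 1) * sigmaN u₁ x ^ (-β) = c)
    (heq2 : ∀ x ∈ sphere (0 : Euc n) 1,
      f x * u₂ x ^ (α - 1) * sigmaN u₂ x ^ (-β) = c) :
    Set.EqOn u₁ u₂ (sphere (0 : Euc n) 1) := by
  intro x hx
  exact le_antisymm
    (one_sided u₁ u₂ f α β c hβ hα h1pos h2pos hfpos h1sm h2sm h1cvx h2cvx heq1 heq2 x hx)
    (one_sided u₂ u₁ f α β c hβ hα h2pos h1pos hfpos h2sm h1sm h2cvx h1cvx heq2 heq1 x hx)

end
end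

section
/- Let u : S^n × [0,T) → (0,∞) solve ∂_t u = −f u^α σ_n(W_u)^{−β} + η(t) u with α > nβ + 1, β > 0, f > 0 smooth, and suppose η(t) satisfies 0 < η_min ≤ η(t) ≤ η_max. Then u_min(t) := min_{S^n} u(·,t) satisfies u_min(t) ≥ min{ (η_min / max_{S^n} f)^{1/(α−nβ−1)}, u_min(0) }, and symmetrically u_max(t) ≤ max{ (η_max / min_{S^n} f)^{1/(α−nβ−1)}, u_max(0) }. -/
open MeasureTheory Metric Set
open scoped RealInnerProductSpace

noncomputable section

variable {n : ℕ}

namespace Work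
variable {n : ℕ}

lemma norm_smul_pos (c : ℝ) (hc : 0 < c) (y : Euc n) : ‖c • y‖ = c * ‖y‖ := by
  rw [norm_smul, Real.norm_eq_abs, abs_of_pos hc]

lemma homExt_smul (u : Euc n → ℝ) {c : ℝ} (hc : 0 < c) (y : Euc n) :
    homExt u (c • y) = c * homExt u y := by
  rcases eq_or_ne y 0 with rfl | hy
  · simp [homExt]
  · have hyn : ‖y‖ ≠ 0 := norm_ne_zero_iff.2 hy
    unfold homExt
    rw [norm_smul_pos c hc, smul_smul, mul_inv, mul_comm (c⁻¹), mul_assoc]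
    rw [mul_assoc ‖y‖⁻¹, inv_mul_cancel₀ hc.ne', mul_one]

lemma homExt_sphere (u : Euc n → ℝ) {x : Euc n} (hx : x ∈ sphere (0 : Euc n) 1) :
    homExt u x = u x := by
  have : ‖x‖ = 1 := by simpa using hx
  simp [homExt, this]

lemma zeroExt_sphere (u : Euc n → ℝ) {x : Euc n} (hx : x ∈ sphere (0 : Euc n) 1) :
    zeroExt u x = u x := by
  have : ‖x‖ = 1 := by simpa using hx
  simp [zeroExt, this]

lemma mem_sphere_norm {x : Euc n} (hx : x ∈ sphere (0 : Euc n) 1) : ‖x‖ = 1 := by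
  simpa using hx

lemma smul_inv_norm_mem_sphere {y : Euc n} (hy : y ≠ 0) :
    ‖y‖⁻¹ • y ∈ sphere (0 : Euc n) 1 := by
  have hyn : ‖y‖ ≠ 0 := norm_ne_zero_iff.2 hy
  simp [norm_smul, abs_of_nonneg (norm_nonneg y), inv_mul_cancel₀ hyn]

/-- continuity of `u` on the sphere from smoothness of the extension -/
lemma contOn_sphere {u : Euc n → ℝ} (h : ContDiffOn ℝ (⊤ : ℕ∞) (homExt u) {(0 : Euc n)}ᶜ) :
    ContinuousOn u (sphere (0 : Euc n) 1) := by
  have hsub : sphere (0 : Euc n) 1 ⊆ {(0 : Euc n)}ᶜ := by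
    intro x hx h0
    simp only [Set.mem_singleton_iff] at h0
    rw [h0] at hx
    simp at hx
  have h1 : ContinuousOn (homExt u) (sphere (0 : Euc n) 1) := (h.continuousOn).mono hsub
  exact h1.congr (fun x hx => (homExt_sphere u hx).symm)

lemma sphere_compact : IsCompact (sphere (0 : Euc n) 1) := isCompact_sphere _ _

lemma sphere_nonempty' : (sphere (0 : Euc n) 1).Nonempty := by
  apply NormedSpace.sphere_nonempty.2
  norm_num


section Calc

variable {w : Euc n → ℝ}

/-- abbreviation for the gradient of the 1-homogeneous extension -/
local notation "h" => homExt w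
local notation "g" => gradient (homExt w)
local notation "H" => fun x => fderiv ℝ (gradient (homExt w)) x

lemma isOpen_compl_zero : IsOpen ({(0 : Euc n)}ᶜ) := isOpen_compl_singleton

lemma D1 (hw : ContDiffOn ℝ (⊤ : ℕ∞) (homExt w) {(0:Euc n)}ᶜ) {y : Euc n} (hy : y ≠ 0) :
    ContDiffAt ℝ (⊤ : ℕ∞) h y :=
  hw.contDiffAt (isOpen_compl_zero.mem_nhds (by simpa using hy))

lemma D2 (hw : ContDiffOn ℝ (⊤ : ℕ∞) (homExt w) {(0:Euc n)}ᶜ) {y : Euc n} (hy : y ≠ 0) :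
    DifferentiableAt ℝ h y :=
  (D1 hw hy).differentiableAt (by simp)

lemma inner_gradient_eq {f : Euc n → ℝ} (y v : Euc n) :
    ⟪gradient f y, v⟫ = fderiv ℝ f y v := by
  rw [gradient]; exact InnerProductSpace.toDual_symm_apply

lemma D4 (hw : ContDiffOn ℝ (⊤ : ℕ∞) (homExt w) {(0:Euc n)}ᶜ) {y : Euc n} (hy : y ≠ 0) :
    ContDiffAt ℝ (⊤ : ℕ∞) g y := by
  have h1 : ContDiffAt ℝ (⊤ : ℕ∞) (fderiv ℝ h) y := (D1 hw hy).fderiv_right (by simp)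
  have h2 : gradient h = fun z => (InnerProductSpace.toDual ℝ (Euc n)).symm (fderiv ℝ h z) := by
    funext z; rw [gradient]
  rw [h2]
  exact ((InnerProductSpace.toDual ℝ (Euc n)).symm.toLinearIsometry.contDiff.contDiffAt).comp y h1

lemma D4' (hw : ContDiffOn ℝ (⊤ : ℕ∞) (homExt w) {(0:Euc n)}ᶜ) {y : Euc n} (hy : y ≠ 0) :
    HasFDerivAt g (H y) y :=
  (((D4 hw hy).differentiableAt (by simp))).hasFDerivAt

/-- scaling of the first derivative -/
lemma D5 (hw : ContDiffOn ℝ (⊤ : ℕ∞) (homExt w) {(0:Euc n)}ᶜ) {c : ℝ} (hc : 0 < c)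
    {y : Euc n} (hy : y ≠ 0) : fderiv ℝ h (c • y) = fderiv ℝ h y := by
  have hcy : c • y ≠ 0 := smul_ne_zero hc.ne' hy
  have hsc : HasFDerivAt (fun z : Euc n => c • z) (c • ContinuousLinearMap.id ℝ (Euc n)) y := by
    exact (hasFDerivAt_id y).const_smul c
  have hcomp : HasFDerivAt (fun z => h (c • z))
      ((fderiv ℝ h (c • y)).comp (c • ContinuousLinearMap.id ℝ (Euc n))) y :=
    ((D2 hw hcy).hasFDerivAt).comp y hsc
  have heq : (fun z => h (c • z)) = fun z => c * h z := by
    funext z; exact homExt_smul w hc z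
  rw [heq] at hcomp
  have hmul : HasFDerivAt (fun z => c * h z) (c • fderiv ℝ h y) y :=
    ((D2 hw hy).hasFDerivAt).const_mul c
  have := hcomp.unique hmul
  ext v
  have h1 : (fderiv ℝ h (c • y)) (c • v) = c * (fderiv ℝ h y v) := by
    have := congrFun (congrArg DFunLike.coe this) v
    simpa using this
  have h2 : (fderiv ℝ h (c • y)) (c • v) = c * (fderiv ℝ h (c • y) v) := by
    simp
  have := h1.symm.trans h2
  exact mul_left_cancel₀ hc.ne' ((h2.symm.trans h1))

/-- scaling of the gradient: 0-homogeneity -/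
lemma D6 (hw : ContDiffOn ℝ (⊤ : ℕ∞) (homExt w) {(0:Euc n)}ᶜ) {c : ℝ} (hc : 0 < c)
    {y : Euc n} (hy : y ≠ 0) : g (c • y) = g y := by
  rw [gradient, gradient, D5 hw hc hy]

/-- scaling of the Hessian -/
lemma D7 (hw : ContDiffOn ℝ (⊤ : ℕ∞) (homExt w) {(0:Euc n)}ᶜ) {c : ℝ} (hc : 0 < c)
    {y : Euc n} (hy : y ≠ 0) : H (c • y) = c⁻¹ • (H y) := by
  have hcy : c • y ≠ 0 := smul_ne_zero hc.ne' hy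
  have hsc : HasFDerivAt (fun z : Euc n => c⁻¹ • z) (c⁻¹ • ContinuousLinearMap.id ℝ (Euc n)) (c • y) := by
    exact (hasFDerivAt_id (c • y)).const_smul c⁻¹
  have hcomp : HasFDerivAt (fun z => g (c⁻¹ • z))
      ((H y).comp (c⁻¹ • ContinuousLinearMap.id ℝ (Euc n))) (c • y) := by
    have hyy : c⁻¹ • (c • y) = y := by
      rw [smul_smul, inv_mul_cancel₀ hc.ne', one_smul]
    have base : HasFDerivAt g (H y) (c⁻¹ • (c • y)) := by
      rw [hyy]; exact D4' hw hy
    exact base.comp (c • y) hsc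
  have heq : (fun z => g (c⁻¹ • z)) =ᶠ[nhds (c • y)] g := by
    filter_upwards [isOpen_compl_zero.mem_nhds (by simpa using hcy)] with z hz
    exact D6 hw (inv_pos.2 hc) (by simpa using hz)
  have h1 : HasFDerivAt g ((H y).comp (c⁻¹ • ContinuousLinearMap.id ℝ (Euc n))) (c • y) :=
    hcomp.congr_of_eventuallyEq heq.symm
  have := h1.unique (D4' hw hcy)
  rw [← this]
  ext v
  simp [mul_comm]

/-- the Hessian kills the radial direction -/
lemma D8 (hw : ContDiffOn ℝ (⊤ : ℕ∞) (homExt w) {(0:Euc n)}ᶜ) {x : Euc n} (hx : x ≠ 0) :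
    H x x = 0 := by
  have hline : HasDerivAt (fun t : ℝ => t • x) ((1:ℝ) • x) 1 := by
    simpa using (hasDerivAt_id (1:ℝ)).smul_const x
  have hcomp : HasDerivAt (fun t : ℝ => g (t • x)) (H x ((1:ℝ) • x)) 1 := by
    have := (D4' hw (by simpa using hx : (1:ℝ) • x ≠ 0)).comp_hasDerivAt 1 hline
    simp only [one_smul] at this ⊢; exact this
  have heq : (fun t : ℝ => g (t • x)) =ᶠ[nhds (1:ℝ)] (fun _ => g x) := by
    filter_upwards [isOpen_Ioi.mem_nhds (by norm_num : (1:ℝ) ∈ Set.Ioi (0:ℝ))] with t ht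
    exact D6 hw ht hx
  have hconst : HasDerivAt (fun t : ℝ => g (t • x)) 0 1 :=
    (hasDerivAt_const (1:ℝ) (g x)).congr_of_eventuallyEq heq
  have := hcomp.unique hconst
  simpa using this

/-- Euler identity -/
lemma D9 (hw : ContDiffOn ℝ (⊤ : ℕ∞) (homExt w) {(0:Euc n)}ᶜ) {x : Euc n} (hx : x ≠ 0) :
    ⟪g x, x⟫ = h x := by
  rw [inner_gradient_eq]
  have hline : HasDerivAt (fun t : ℝ => t • x) ((1:ℝ) • x) 1 := by
    simpa using (hasDerivAt_id (1:ℝ)).smul_const x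
  have hcomp : HasDerivAt (fun t : ℝ => h (t • x)) (fderiv ℝ h x ((1:ℝ) • x)) 1 := by
    have base : HasFDerivAt h (fderiv ℝ h x) ((1:ℝ) • x) := by
      rw [one_smul]; exact (D2 hw hx).hasFDerivAt
    have := base.comp_hasDerivAt 1 hline
    simp only [one_smul] at this ⊢; exact this
  have heq : (fun t : ℝ => h (t • x)) =ᶠ[nhds (1:ℝ)] (fun t => t * h x) := by
    filter_upwards [isOpen_Ioi.mem_nhds (by norm_num : (1:ℝ) ∈ Set.Ioi (0:ℝ))] with t ht
    exact homExt_smul w ht x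
  have hconst : HasDerivAt (fun t : ℝ => h (t • x)) (h x) 1 := by
    have : HasDerivAt (fun t : ℝ => t * h x) (h x) 1 := by
      simpa using (hasDerivAt_id (1:ℝ)).mul_const (h x)
    exact this.congr_of_eventuallyEq heq
  have := hcomp.unique hconst
  simpa using this

/-- symmetry of the Hessian -/
lemma D10 (hw : ContDiffOn ℝ (⊤ : ℕ∞) (homExt w) {(0:Euc n)}ᶜ) {x : Euc n} (hx : x ≠ 0)
    (v v' : Euc n) : ⟪H x v, v'⟫ = ⟪H x v', v⟫ := by
  set f'' := fderiv ℝ (fderiv ℝ h) x with hf''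
  have hev : ∀ᶠ y in nhds x, HasFDerivAt h (fderiv ℝ h y) y := by
    filter_upwards [isOpen_compl_zero.mem_nhds (by simpa using hx)] with z hz
    exact (D2 hw (by simpa using hz)).hasFDerivAt
  have hdf : HasFDerivAt (fderiv ℝ h) f'' x := by
    have : ContDiffAt ℝ 1 (fderiv ℝ h) x := (D1 hw hx).fderiv_right (WithTop.coe_le_coe.mpr le_top)
    exact (this.differentiableAt one_ne_zero).hasFDerivAt
  have hsymm := second_derivative_symmetric_of_eventually hev hdf
  -- now identify ⟪H x v, v'⟫ with f'' v v'
  have key : ∀ u' v₀ : Euc n, ⟪H x v₀, u'⟫ = f'' v₀ u' := by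
    intro u' v₀
    have hF1 : HasFDerivAt (fun y => ⟪u', g y⟫) ((innerSL ℝ u').comp (H x)) x :=
      ((innerSL ℝ u').hasFDerivAt).comp x (D4' hw hx)
    have hF2 : HasFDerivAt (fun y => (fderiv ℝ h y) u')
        ((ContinuousLinearMap.apply ℝ ℝ u').comp f'') x :=
      ((ContinuousLinearMap.apply ℝ ℝ u').hasFDerivAt).comp x hdf
    have heq : (fun y => ⟪u', g y⟫) =ᶠ[nhds x] (fun y => (fderiv ℝ h y) u') := by
      filter_upwards [isOpen_compl_zero.mem_nhds (by simpa using hx)] with z hz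
      rw [real_inner_comm]
      exact inner_gradient_eq z u'
    have := (hF1.congr_of_eventuallyEq heq.symm).unique hF2
    have happ := congrFun (congrArg DFunLike.coe this) v₀
    simp only [ContinuousLinearMap.coe_comp', Function.comp_apply,
      ContinuousLinearMap.apply_apply, innerSL_apply_apply] at happ
    rw [real_inner_comm]
    exact happ
  rw [key v' v, key v v', hsymm v v']


lemma Amap_apply (x v : Euc n) :
    Amap w x v = fderiv ℝ (gradient (homExt w)) x v + ⟪x, v⟫ • x := by
  simp [Amap]

lemma Amap_self (hw : ContDiffOn ℝ (⊤ : ℕ∞) (homExt w) {(0:Euc n)}ᶜ) {x : Euc n}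
    (hx : x ∈ sphere (0 : Euc n) 1) : Amap w x x = x := by
  rw [Amap_apply, D8 hw (by intro h0; rw [h0] at hx; simp at hx)]
  have : ⟪x, x⟫ = 1 := by
    rw [real_inner_self_eq_norm_sq, mem_sphere_norm hx]; norm_num
  rw [this]; simp

lemma Amap_sym (hw : ContDiffOn ℝ (⊤ : ℕ∞) (homExt w) {(0:Euc n)}ᶜ) {x : Euc n}
    (hx : x ∈ sphere (0 : Euc n) 1) (v v' : Euc n) :
    ⟪Amap w x v, v'⟫ = ⟪v, Amap w x v'⟫ := by
  have hx0 : x ≠ 0 := by intro h0; rw [h0] at hx; simp at hx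
  rw [Amap_apply, Amap_apply, inner_add_left, inner_add_right,
    real_inner_smul_left, real_inner_smul_right, D10 hw hx0 v v',
    real_inner_comm v (fderiv ℝ (gradient (homExt w)) x v'), real_inner_comm v x]
  ring

/-- eigen-decomposition of `sigmaN` at a sphere point, with tangent unit eigenvectors -/
lemma sigma_eigen (hw : ContDiffOn ℝ (⊤ : ℕ∞) (homExt w) {(0:Euc n)}ᶜ) {x : Euc n}
    (hx : x ∈ sphere (0 : Euc n) 1) :
    ∃ lam : Fin n → ℝ, sigmaN w x = ∏ i, lam i ∧
      ∀ i, ∃ v : Euc n, ⟪v, x⟫ = 0 ∧ ‖v‖ = 1 ∧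
        lam i = ⟪fderiv ℝ (gradient (homExt w)) x v, v⟫ := by
  classical
  have hx0 : x ≠ 0 := by intro h0; rw [h0] at hx; simp at hx
  -- orthonormal basis with b 0 = x
  obtain ⟨b, hb0⟩ : ∃ b : OrthonormalBasis (Fin (n+1)) ℝ (Euc n), ∀ i ∈ ({0} : Set (Fin (n+1))), b i = x := by
    apply Orthonormal.exists_orthonormalBasis_extension_of_card_eq
    · simp [finrank_euclideanSpace_fin]
    · constructor
      · rintro ⟨i, hi⟩
        simp only [Set.restrict_apply]
        exact mem_sphere_norm hx
      · rintro ⟨i, hi⟩ ⟨j, hj⟩ hij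
        exfalso
        apply hij
        simp only [Set.mem_singleton_iff] at hi hj
        exact Subtype.ext (hi.trans hj.symm)
  have hb0' : b 0 = x := hb0 0 rfl
  set A := Amap w x with hA
  set M := LinearMap.toMatrix b.toBasis b.toBasis A.toLinearMap with hM
  have hMdet : sigmaN w x = M.det := (LinearMap.det_toMatrix b.toBasis A.toLinearMap).symm
  have hMentry : ∀ i j, M i j = ⟪b i, A (b j)⟫ := by
    intro i j
    rw [hM, LinearMap.toMatrix_apply, OrthonormalBasis.coe_toBasis_repr_apply,
      OrthonormalBasis.repr_apply_apply]
    simp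
  have hiter : ∀ i j : Fin (n+1), ⟪b i, b j⟫ = if i = j then 1 else 0 :=
    orthonormal_iff_ite.mp b.orthonormal
  have hrow : ∀ j, M 0 j = if j = 0 then 1 else 0 := by
    intro j
    rw [hMentry, hb0', ← Amap_sym hw hx, ← hA, Amap_self hw hx, ← hb0', hiter]
    simp [eq_comm]
  set S := M.submatrix Fin.succ Fin.succ with hS
  have hdetS : M.det = S.det := by
    rw [Matrix.det_succ_row_zero]
    rw [Finset.sum_eq_single 0]
    · simp [hrow, hS, Fin.succAbove_zero]
    · intro j _ hj
      simp [hrow, hj]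
    · intro hj; exact absurd (Finset.mem_univ 0) hj
  have hSentry : ∀ i j, S i j = ⟪b i.succ, A (b j.succ)⟫ := by
    intro i j; rw [hS]; exact hMentry i.succ j.succ
  have hherm : S.IsHermitian := by
    rw [Matrix.IsHermitian]
    ext i j
    simp only [Matrix.conjTranspose_apply, star_trivial]
    rw [hSentry, hSentry, ← Amap_sym hw hx, real_inner_comm]
  have hdet2 : S.det = ∏ i, hherm.eigenvalues i := by
    have := hherm.det_eq_prod_eigenvalues
    simpa using this
  refine ⟨hherm.eigenvalues, by rw [hMdet, hdetS, hdet2], ?_⟩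
  intro i
  set e : Fin n → ℝ := (WithLp.equiv 2 (Fin n → ℝ)) (hherm.eigenvectorBasis i) with he
  have hmv := hherm.mulVec_eigenvectorBasis i
  have hmv' : ∀ k, ∑ j, S k j * e j = hherm.eigenvalues i * e k := by
    intro k
    have := congrFun hmv k
    simpa [Matrix.mulVec, dotProduct, he] using this
  have hnorme : ∑ j, e j ^ 2 = 1 := by
    have h1 : ‖hherm.eigenvectorBasis i‖ = 1 := hherm.eigenvectorBasis.orthonormal.1 i
    have h2 := EuclideanSpace.norm_eq (hherm.eigenvectorBasis i)
    rw [h1] at h2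
    have h3 : ∑ j, ‖hherm.eigenvectorBasis i j‖ ^ 2 = 1 := by
      have := congrArg (fun t => t ^ 2) h2.symm
      simpa [Real.sq_sqrt (Finset.sum_nonneg fun j _ => sq_nonneg _)] using this
    convert h3 using 2 with j
    rw [Real.norm_eq_abs, sq_abs]
    rfl
  set v : Euc n := ∑ j, e j • b j.succ with hv
  have hvt : ⟪v, x⟫ = 0 := by
    rw [hv, sum_inner]
    apply Finset.sum_eq_zero
    intro j _
    rw [real_inner_smul_left, ← hb0', hiter]
    simp [Fin.succ_ne_zero]
  have hAv : ⟪v, A v⟫ = hherm.eigenvalues i := by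
    have hexp : ⟪v, A v⟫ = ∑ k, ∑ j, e k * (e j * S k j) := by
      rw [hv, map_sum, sum_inner]
      congr 1
      ext k
      rw [real_inner_smul_left, inner_sum]
      rw [Finset.mul_sum]
      congr 1
      ext j
      rw [_root_.map_smul, real_inner_smul_right, hSentry]
    rw [hexp]
    have : ∀ k, ∑ j, e k * (e j * S k j) = e k * (hherm.eigenvalues i * e k) := by
      intro k
      rw [← Finset.mul_sum, ← hmv' k]
      congr 1
      apply Finset.sum_congr rfl
      intro j _
      ring
    rw [Finset.sum_congr rfl fun k _ => this k]
    have : ∑ k, e k * (hherm.eigenvalues i * e k) = hherm.eigenvalues i * ∑ k, e k ^ 2 := by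
      rw [Finset.mul_sum]
      apply Finset.sum_congr rfl
      intro k _
      ring
    rw [this, hnorme, mul_one]
  have hnv : ‖v‖ = 1 := by
    have hvv : ⟪v, v⟫ = ∑ k, ∑ j, e k * (e j * (if k.succ = j.succ then (1:ℝ) else 0)) := by
      rw [hv, sum_inner]
      apply Finset.sum_congr rfl
      intro k _
      rw [real_inner_smul_left, inner_sum, Finset.mul_sum]
      apply Finset.sum_congr rfl
      intro j _
      rw [real_inner_smul_right, hiter]
    simp only [Fin.succ_inj] at hvv
    have hvv2 : ⟪v, v⟫ = ∑ k, e k ^ 2 := by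
      rw [hvv]
      apply Finset.sum_congr rfl
      intro k _
      rw [Finset.sum_eq_single k]
      · simp [sq]
      · intro j _ hj; simp [Ne.symm hj]
      · intro hk; exact absurd (Finset.mem_univ k) hk
    rw [hnorme] at hvv2
    have h2 := real_inner_self_eq_norm_sq v
    rw [hvv2] at h2
    nlinarith [norm_nonneg v]
  refine ⟨v, hvt, hnv, ?_⟩
  have hxv : ⟪x, v⟫ = 0 := by rw [real_inner_comm]; exact hvt
  rw [← hAv, hA, Amap_apply, inner_add_right, real_inner_smul_right, hxv, zero_mul,
    add_zero, real_inner_comm]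

/-- positivity of `sigmaN` from tangential positive-definiteness -/
lemma sigma_pos (hw : ContDiffOn ℝ (⊤ : ℕ∞) (homExt w) {(0:Euc n)}ᶜ) {x : Euc n}
    (hx : x ∈ sphere (0 : Euc n) 1)
    (hpd : ∀ v : Euc n, ⟪v, x⟫ = 0 → v ≠ 0 → 0 < ⟪fderiv ℝ (gradient (homExt w)) x v, v⟫) :
    0 < sigmaN w x := by
  obtain ⟨lam, hdet, hlam⟩ := sigma_eigen hw hx
  rw [hdet]
  apply Finset.prod_pos
  intro i _
  obtain ⟨v, hvt, hv1, hvl⟩ := hlam i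
  have hv0 : v ≠ 0 := by intro h0; rw [h0] at hv1; simp at hv1
  rw [hvl]
  exact hpd v hvt hv0

lemma sigma_lower (hw : ContDiffOn ℝ (⊤ : ℕ∞) (homExt w) {(0:Euc n)}ᶜ) {x : Euc n}
    (hx : x ∈ sphere (0 : Euc n) 1) {c : ℝ} (hc : 0 ≤ c)
    (hlow : ∀ v : Euc n, ⟪v, x⟫ = 0 → ‖v‖ = 1 → c ≤ ⟪fderiv ℝ (gradient (homExt w)) x v, v⟫) :
    c ^ n ≤ sigmaN w x := by
  obtain ⟨lam, hdet, hlam⟩ := sigma_eigen hw hx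
  rw [hdet]
  rw [show c ^ n = ∏ _i : Fin n, c by simp]
  apply Finset.prod_le_prod
  · intro i _; exact hc
  · intro i _
    obtain ⟨v, hvt, hv1, hvl⟩ := hlam i
    rw [hvl]
    exact hlow v hvt hv1

lemma sigma_upper (hw : ContDiffOn ℝ (⊤ : ℕ∞) (homExt w) {(0:Euc n)}ᶜ) {x : Euc n}
    (hx : x ∈ sphere (0 : Euc n) 1) {C : ℝ}
    (hnn : ∀ v : Euc n, ⟪v, x⟫ = 0 → 0 ≤ ⟪fderiv ℝ (gradient (homExt w)) x v, v⟫)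
    (hup : ∀ v : Euc n, ⟪v, x⟫ = 0 → ‖v‖ = 1 → ⟪fderiv ℝ (gradient (homExt w)) x v, v⟫ ≤ C) :
    sigmaN w x ≤ C ^ n := by
  obtain ⟨lam, hdet, hlam⟩ := sigma_eigen hw hx
  rw [hdet]
  rw [show C ^ n = ∏ _i : Fin n, C by simp]
  apply Finset.prod_le_prod
  · intro i _
    obtain ⟨v, hvt, hv1, hvl⟩ := hlam i
    rw [hvl]
    exact hnn v hvt
  · intro i _
    obtain ⟨v, hvt, hv1, hvl⟩ := hlam i
    rw [hvl]
    exact hup v hvt hv1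


end Calc

/-- one-dimensional second derivative test at a local minimum -/
lemma second_deriv_test_min {φ φ' : ℝ → ℝ} {c δ : ℝ} (hδ : 0 < δ)
    (hd : ∀ s : ℝ, HasDerivAt φ (φ' s) s) (hd2 : HasDerivAt φ' c 0)
    (hmin : ∀ s, |s| < δ → φ 0 ≤ φ s) : 0 ≤ c := by
  by_contra hc
  push_neg at hc
  have hloc : IsLocalMin φ 0 := by
    have : ∀ᶠ s in nhds (0:ℝ), φ 0 ≤ φ s := by
      filter_upwards [Metric.ball_mem_nhds (0:ℝ) hδ] with s hs
      exact hmin s (by simpa [Real.dist_eq] using hs)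
    exact this
  have h0 : φ' 0 = 0 := hloc.hasDerivAt_eq_zero (hd 0)
  -- slope of φ' tends to c < 0
  have hslope := hasDerivAt_iff_tendsto_slope.mp hd2
  have hev : ∀ᶠ s in nhdsWithin (0:ℝ) {(0:ℝ)}ᶜ, slope φ' 0 s < c / 2 :=
    hslope.eventually_lt_const (by linarith)
  obtain ⟨U, hU, hUs⟩ := Filter.eventually_iff_exists_mem.mp hev
  obtain ⟨ε, hε, hball⟩ := Metric.mem_nhdsWithin_iff.mp hU
  set t := min ε δ / 2 with ht
  have htpos : 0 < t := by positivity
  have htδ : t < δ := by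
    have h5 : t ≤ δ / 2 := by rw [ht]; have := min_le_right ε δ; linarith
    linarith
  have hneg : ∀ s, 0 < s → s < min ε δ → φ' s < 0 := by
    intro s hs hsε
    have hmem : s ∈ Metric.ball (0:ℝ) ε ∩ {(0:ℝ)}ᶜ := by
      constructor
      · simp [Real.dist_eq, abs_of_pos hs]
        exact hsε.trans_le (min_le_left _ _)
      · simp [hs.ne']
    have := hUs s (hball hmem)
    rw [slope_def_field] at this
    have h2 : (φ' s - φ' 0) / (s - 0) < c / 2 := by
      simpa [div_eq_mul_inv] using this
    rw [h0, sub_zero, sub_zero] at h2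
    have : φ' s < (c/2) * s := by
      rw [div_lt_iff₀ hs] at h2
      linarith
    nlinarith
  -- MVT on [0, t]
  have hcont : ContinuousOn φ (Set.Icc 0 t) := fun s _ => (hd s).continuousAt.continuousWithinAt
  obtain ⟨ξ, hξ, hslopeξ⟩ := exists_hasDerivAt_eq_slope φ φ' htpos hcont (fun s _ => hd s)
  have hξneg : φ' ξ < 0 := by
    apply hneg ξ hξ.1
    calc ξ < t := hξ.2
    _ < min ε δ := by rw [ht]; exact half_lt_self (by positivity)
  rw [hslopeξ] at hξneg
  have : φ t < φ 0 := by
    have h3 : (φ t - φ 0) / (t - 0) < 0 := hξneg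
    rw [sub_zero] at h3
    have := (div_neg_iff.mp h3)
    rcases this with ⟨h4, _⟩ | ⟨h4, h5⟩
    · linarith
    · linarith
  exact absurd this (not_lt.2 (hmin t (by rw [abs_of_pos htpos]; exact htδ)))

lemma second_deriv_test_max {φ φ' : ℝ → ℝ} {c δ : ℝ} (hδ : 0 < δ)
    (hd : ∀ s : ℝ, HasDerivAt φ (φ' s) s) (hd2 : HasDerivAt φ' c 0)
    (hmax : ∀ s, |s| < δ → φ s ≤ φ 0) : c ≤ 0 := by
  have := second_deriv_test_min (φ := fun s => -φ s) (φ' := fun s => -φ' s) (c := -c) hδ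
    (fun s => (hd s).neg) hd2.neg (fun s hs => neg_le_neg (hmax s hs))
  linarith

lemma norm_add_tangent {x v : Euc n} (hx : x ∈ sphere (0 : Euc n) 1)
    (hvt : ⟪v, x⟫ = 0) (hv1 : ‖v‖ = 1) (s : ℝ) :
    ‖x + s • v‖ = Real.sqrt (1 + s ^ 2) := by
  have h1 : ⟪x, s • v⟫ = 0 := by
    rw [real_inner_smul_right, show ⟪x, v⟫ = (0:ℝ) from by rw [real_inner_comm]; exact hvt,
      mul_zero]
  have hsq : ‖x + s • v‖ ^ 2 = 1 + s ^ 2 := by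
    rw [norm_add_sq_real, h1, norm_smul, mem_sphere_norm hx, hv1, Real.norm_eq_abs]
    simp [sq_abs]
  rw [← hsq, Real.sqrt_sq (norm_nonneg _)]

lemma add_tangent_ne_zero {x v : Euc n} (hx : x ∈ sphere (0 : Euc n) 1)
    (hvt : ⟪v, x⟫ = 0) (hv1 : ‖v‖ = 1) (s : ℝ) : x + s • v ≠ 0 := by
  intro h0
  have := norm_add_tangent hx hvt hv1 s
  rw [h0, norm_zero] at this
  have h1 : (0:ℝ) < Real.sqrt (1 + s ^ 2) := Real.sqrt_pos.2 (by positivity)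
  rw [← this] at h1
  exact lt_irrefl _ h1

/-- derivative of `s ↦ m·√(1+s²)` -/
lemma hasDerivAt_msqrt (m s : ℝ) :
    HasDerivAt (fun s : ℝ => m * Real.sqrt (1 + s ^ 2))
      (m * (s / Real.sqrt (1 + s ^ 2))) s := by
  have h1 : HasDerivAt (fun s : ℝ => 1 + s ^ 2) (2 * s) s := by
    simpa using (hasDerivAt_pow 2 s).const_add (1:ℝ)
  have hne : (1 + s ^ 2 : ℝ) ≠ 0 := by positivity
  have h2 := (Real.hasDerivAt_sqrt hne).comp s h1
  have h3 := h2.const_mul m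
  refine h3.congr_deriv ?_
  have hs : Real.sqrt (1 + s ^ 2) ≠ 0 := by
    apply Real.sqrt_ne_zero'.2; positivity
  ring

/-- second derivative of `s ↦ m·√(1+s²)` at `0` is `m` -/
lemma hasDerivAt_msqrt' (m : ℝ) :
    HasDerivAt (fun s : ℝ => m * (s / Real.sqrt (1 + s ^ 2))) m 0 := by
  have h1 : HasDerivAt (fun s : ℝ => 1 + s ^ 2) (2 * 0) 0 := by
    simpa using (hasDerivAt_pow 2 (0:ℝ)).const_add (1:ℝ)
  have hne : ((1:ℝ) + 0 ^ 2 : ℝ) ≠ 0 := by norm_num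
  have hsq := (Real.hasDerivAt_sqrt hne).comp 0 h1
  have hsqv : Real.sqrt (1 + (0:ℝ) ^ 2) = 1 := by norm_num
  have hinv : HasDerivAt (fun s : ℝ => (Real.sqrt (1 + s ^ 2))⁻¹) 0 0 := by
    have := hsq.inv (by simp)
    exact this.congr_deriv (by simp)
  have hprod : HasDerivAt (fun s : ℝ => s * (Real.sqrt (1 + s ^ 2))⁻¹) 1 0 := by
    have := (hasDerivAt_id (0:ℝ)).mul hinv
    exact this.congr_deriv (by norm_num)
  have hfun : (fun s : ℝ => m * (s / Real.sqrt (1 + s ^ 2)))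
      = fun s : ℝ => m * (s * (Real.sqrt (1 + s ^ 2))⁻¹) := by
    funext s; rw [div_eq_mul_inv]
  rw [hfun]
  simpa using hprod.const_mul m

section TangentHess

variable {w : Euc n → ℝ}

lemma tangent_hess_core (hw : ContDiffOn ℝ (⊤ : ℕ∞) (homExt w) {(0:Euc n)}ᶜ) {x : Euc n}
    (hx : x ∈ sphere (0 : Euc n) 1)
    {v : Euc n} (hvt : ⟪v, x⟫ = 0) (hv1 : ‖v‖ = 1) :
    ∃ q' : ℝ → ℝ,
      (∀ s : ℝ, HasDerivAt (fun s => homExt w (x + s • v)) (q' s) s) ∧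
      HasDerivAt q' ⟪fderiv ℝ (gradient (homExt w)) x v, v⟫ 0 := by
  have hx0 : x ≠ 0 := by intro h0; rw [h0] at hx; simp at hx
  set q' : ℝ → ℝ := fun s => ⟪v, gradient (homExt w) (x + s • v)⟫ with hq'
  have hline : ∀ s : ℝ, HasDerivAt (fun s : ℝ => x + s • v) v s := by
    intro s
    exact (((hasDerivAt_id s).smul_const v).const_add x).congr_deriv (one_smul ℝ v)
  have hne : ∀ s : ℝ, x + s • v ≠ 0 := add_tangent_ne_zero hx hvt hv1
  have hq : ∀ s : ℝ, HasDerivAt (fun s => homExt w (x + s • v)) (q' s) s := by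
    intro s
    have hcomp := ((D2 hw (hne s)).hasFDerivAt).comp_hasDerivAt s (hline s)
    have heq : fderiv ℝ (homExt w) (x + s • v) v = q' s := by
      rw [hq', ← inner_gradient_eq, real_inner_comm]
    rw [← heq]
    exact hcomp
  have hg0 : HasFDerivAt (gradient (homExt w)) (fderiv ℝ (gradient (homExt w)) x)
      (x + (0:ℝ) • v) := by
    have := D4' hw hx0
    rw [show x + (0:ℝ) • v = x by simp]
    exact this
  have hgl : HasDerivAt (fun s : ℝ => gradient (homExt w) (x + s • v))
      (fderiv ℝ (gradient (homExt w)) x v) 0 := by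
    exact hg0.comp_hasDerivAt 0 (hline 0)
  have hq2 : HasDerivAt q' ⟪fderiv ℝ (gradient (homExt w)) x v, v⟫ 0 := by
    have h2 := ((innerSL ℝ v).hasFDerivAt).comp_hasDerivAt 0 hgl
    rw [real_inner_comm]
    exact h2
  exact ⟨q', hq, hq2⟩

/-- tangential Hessian lower bound at a point of minimum on the sphere -/
lemma tangent_hess_min (hw : ContDiffOn ℝ (⊤ : ℕ∞) (homExt w) {(0:Euc n)}ᶜ) {x : Euc n}
    (hx : x ∈ sphere (0 : Euc n) 1) (hmin : ∀ y ∈ sphere (0 : Euc n) 1, w x ≤ w y)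
    {v : Euc n} (hvt : ⟪v, x⟫ = 0) (hv1 : ‖v‖ = 1) :
    w x ≤ ⟪fderiv ℝ (gradient (homExt w)) x v, v⟫ := by
  obtain ⟨q', hq, hq2⟩ := tangent_hess_core hw hx hvt hv1
  set m := w x with hm
  have hne : ∀ s : ℝ, x + s • v ≠ 0 := add_tangent_ne_zero hx hvt hv1
  set φ : ℝ → ℝ := fun s => homExt w (x + s • v) - m * Real.sqrt (1 + s ^ 2) with hφ
  set φ' : ℝ → ℝ := fun s => q' s - m * (s / Real.sqrt (1 + s ^ 2)) with hφ'
  have hdφ : ∀ s, HasDerivAt φ (φ' s) s := fun s => (hq s).sub (hasDerivAt_msqrt m s)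
  have hdφ2 : HasDerivAt φ' (⟪fderiv ℝ (gradient (homExt w)) x v, v⟫ - m) 0 :=
    hq2.sub (hasDerivAt_msqrt' m)
  have hφ0 : φ 0 = 0 := by
    simp only [hφ]
    rw [show x + (0:ℝ) • v = x by simp, homExt_sphere w hx]
    norm_num [hm]
  have hφnn : ∀ s : ℝ, 0 ≤ φ s := by
    intro s
    have hmem := smul_inv_norm_mem_sphere (hne s)
    have h1 : m ≤ w (‖x + s • v‖⁻¹ • (x + s • v)) := hmin _ hmem
    have h2 : homExt w (x + s • v) = ‖x + s • v‖ * w (‖x + s • v‖⁻¹ • (x + s • v)) := rfl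
    have h3 : ‖x + s • v‖ = Real.sqrt (1 + s ^ 2) := norm_add_tangent hx hvt hv1 s
    simp only [hφ]
    have h4 : (0:ℝ) ≤ Real.sqrt (1 + s ^ 2) := Real.sqrt_nonneg _
    rw [h3] at h1
    rw [h2, h3]
    nlinarith [mul_le_mul_of_nonneg_left h1 h4]
  have := second_deriv_test_min (δ := 1) one_pos hdφ hdφ2
    (fun s _ => by rw [hφ0]; exact hφnn s)
  linarith

/-- tangential Hessian upper bound at a point of maximum on the sphere -/
lemma tangent_hess_max (hw : ContDiffOn ℝ (⊤ : ℕ∞) (homExt w) {(0:Euc n)}ᶜ) {x : Euc n}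
    (hx : x ∈ sphere (0 : Euc n) 1) (hmax : ∀ y ∈ sphere (0 : Euc n) 1, w y ≤ w x)
    {v : Euc n} (hvt : ⟪v, x⟫ = 0) (hv1 : ‖v‖ = 1) :
    ⟪fderiv ℝ (gradient (homExt w)) x v, v⟫ ≤ w x := by
  obtain ⟨q', hq, hq2⟩ := tangent_hess_core hw hx hvt hv1
  set m := w x with hm
  have hne : ∀ s : ℝ, x + s • v ≠ 0 := add_tangent_ne_zero hx hvt hv1
  set φ : ℝ → ℝ := fun s => homExt w (x + s • v) - m * Real.sqrt (1 + s ^ 2) with hφ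
  set φ' : ℝ → ℝ := fun s => q' s - m * (s / Real.sqrt (1 + s ^ 2)) with hφ'
  have hdφ : ∀ s, HasDerivAt φ (φ' s) s := fun s => (hq s).sub (hasDerivAt_msqrt m s)
  have hdφ2 : HasDerivAt φ' (⟪fderiv ℝ (gradient (homExt w)) x v, v⟫ - m) 0 :=
    hq2.sub (hasDerivAt_msqrt' m)
  have hφ0 : φ 0 = 0 := by
    simp only [hφ]
    rw [show x + (0:ℝ) • v = x by simp, homExt_sphere w hx]
    norm_num [hm]
  have hφnn : ∀ s : ℝ, φ s ≤ 0 := by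
    intro s
    have hmem := smul_inv_norm_mem_sphere (hne s)
    have h1 : w (‖x + s • v‖⁻¹ • (x + s • v)) ≤ m := hmax _ hmem
    have h2 : homExt w (x + s • v) = ‖x + s • v‖ * w (‖x + s • v‖⁻¹ • (x + s • v)) := rfl
    have h3 : ‖x + s • v‖ = Real.sqrt (1 + s ^ 2) := norm_add_tangent hx hvt hv1 s
    simp only [hφ]
    have h4 : (0:ℝ) ≤ Real.sqrt (1 + s ^ 2) := Real.sqrt_nonneg _
    rw [h3] at h1
    rw [h2, h3]
    nlinarith [mul_le_mul_of_nonneg_left h1 h4]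
  have := second_deriv_test_max (δ := 1) one_pos hdφ hdφ2
    (fun s _ => by rw [hφ0]; exact hφnn s)
  linarith

end TangentHess

section Lip
variable {w : Euc n → ℝ}

/-- PSD of the Hessian at sphere points -/
lemma psd_sphere (hw : ContDiffOn ℝ (⊤ : ℕ∞) (homExt w) {(0:Euc n)}ᶜ) (hcvx : WPosDef w)
    {x : Euc n} (hx : x ∈ sphere (0 : Euc n) 1) (v : Euc n) :
    0 ≤ ⟪fderiv ℝ (gradient (homExt w)) x v, v⟫ := by
  have hx0 : x ≠ 0 := by intro h0; rw [h0] at hx; simp at hx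
  set H := fderiv ℝ (gradient (homExt w)) x with hH
  set a := ⟪v, x⟫ with ha
  set vt := v - a • x with hvt
  have hxx : ⟪x, x⟫ = 1 := by
    rw [real_inner_self_eq_norm_sq, mem_sphere_norm hx]; norm_num
  have htan : ⟪vt, x⟫ = 0 := by
    rw [hvt, inner_sub_left, real_inner_smul_left, hxx, mul_one, ha, sub_self]
  have hdecomp : v = a • x + vt := by rw [hvt]; abel
  have hHx : H x = 0 := D8 hw hx0
  have hexp : ⟪H v, v⟫ = ⟪H vt, vt⟫ := by
    rw [hdecomp]
    rw [map_add, _root_.map_smul, hHx, smul_zero, zero_add, inner_add_right,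
      real_inner_smul_right]
    have : ⟪H vt, x⟫ = 0 := by rw [D10 hw hx0 vt x, hHx, inner_zero_left]
    rw [this, mul_zero, zero_add]
  rw [hexp]
  rcases eq_or_ne vt 0 with h0 | h0
  · rw [h0]; simp
  · exact le_of_lt (hcvx x hx vt htan h0)

/-- PSD of the Hessian on the punctured space -/
lemma psd_shell (hw : ContDiffOn ℝ (⊤ : ℕ∞) (homExt w) {(0:Euc n)}ᶜ) (hcvx : WPosDef w)
    {z : Euc n} (hz : z ≠ 0) (v : Euc n) :
    0 ≤ ⟪fderiv ℝ (gradient (homExt w)) z v, v⟫ := by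
  have hn : ‖z‖ ≠ 0 := norm_ne_zero_iff.2 hz
  set zh := ‖z‖⁻¹ • z with hzh
  have hzh0 : zh ≠ 0 := smul_ne_zero (inv_ne_zero hn) hz
  have hzz : ‖z‖ • zh = z := by rw [hzh, smul_smul, mul_inv_cancel₀ hn, one_smul]
  have h7 := D7 hw (norm_pos_iff.2 hz) hzh0
  rw [hzz] at h7
  have h7' : fderiv ℝ (gradient (homExt w)) z
      = ‖z‖⁻¹ • fderiv ℝ (gradient (homExt w)) zh := h7
  rw [h7']
  have : ((‖z‖⁻¹ • fderiv ℝ (gradient (homExt w)) zh) v) = ‖z‖⁻¹ • (fderiv ℝ (gradient (homExt w)) zh v) := rfl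
  rw [this, real_inner_smul_left]
  have := psd_sphere hw hcvx (smul_inv_norm_mem_sphere hz) v
  positivity

/-- second derivative along a line through a sphere point, at all parameters -/
lemma line_deriv2 (hw : ContDiffOn ℝ (⊤ : ℕ∞) (homExt w) {(0:Euc n)}ᶜ) {x : Euc n}
    (hx : x ∈ sphere (0 : Euc n) 1)
    {v : Euc n} (hvt : ⟪v, x⟫ = 0) (hv1 : ‖v‖ = 1) :
    ∃ q' : ℝ → ℝ, (∀ s : ℝ, HasDerivAt (fun s => homExt w (x + s • v)) (q' s) s) ∧
      (∀ s₀ : ℝ, HasDerivAt q'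
        ⟪fderiv ℝ (gradient (homExt w)) (x + s₀ • v) v, v⟫ s₀) ∧
      (∀ s : ℝ, q' s = ⟪v, gradient (homExt w) (x + s • v)⟫) := by
  set q' : ℝ → ℝ := fun s => ⟪v, gradient (homExt w) (x + s • v)⟫ with hq'
  have hline : ∀ s : ℝ, HasDerivAt (fun s : ℝ => x + s • v) v s := by
    intro s
    exact (((hasDerivAt_id s).smul_const v).const_add x).congr_deriv (one_smul ℝ v)
  have hne : ∀ s : ℝ, x + s • v ≠ 0 := add_tangent_ne_zero hx hvt hv1
  have hq : ∀ s : ℝ, HasDerivAt (fun s => homExt w (x + s • v)) (q' s) s := by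
    intro s
    have hcomp := ((D2 hw (hne s)).hasFDerivAt).comp_hasDerivAt s (hline s)
    have heq : fderiv ℝ (homExt w) (x + s • v) v = q' s := by
      rw [hq', ← inner_gradient_eq, real_inner_comm]
    rw [← heq]
    exact hcomp
  refine ⟨q', hq, ?_, fun s => rfl⟩
  intro s₀
  have hg0 : HasFDerivAt (gradient (homExt w))
      (fderiv ℝ (gradient (homExt w)) (x + s₀ • v)) (x + s₀ • v) := D4' hw (hne s₀)
  have hgl : HasDerivAt (fun s : ℝ => gradient (homExt w) (x + s • v))
      (fderiv ℝ (gradient (homExt w)) (x + s₀ • v) v) s₀ := by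
    exact hg0.comp_hasDerivAt s₀ (hline s₀)
  have h2 := ((innerSL ℝ v).hasFDerivAt).comp_hasDerivAt s₀ hgl
  rw [real_inner_comm]
  exact h2

/-- gradient bound on the sphere from convexity and bounds on `w` -/
lemma grad_bound (hw : ContDiffOn ℝ (⊤ : ℕ∞) (homExt w) {(0:Euc n)}ᶜ) (hcvx : WPosDef w)
    {B : ℝ} (hpos : ∀ y ∈ sphere (0 : Euc n) 1, 0 ≤ w y)
    (hB : ∀ y ∈ sphere (0 : Euc n) 1, w y ≤ B)
    {x : Euc n} (hx : x ∈ sphere (0 : Euc n) 1) :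
    ‖gradient (homExt w) x‖ ≤ 3 * B := by
  have hx0 : x ≠ 0 := by intro h0; rw [h0] at hx; simp at hx
  have hB0 : 0 ≤ B := le_trans (hpos x hx) (hB x hx)
  set G := gradient (homExt w) x with hG
  set a := ⟪G, x⟫ with ha
  have haw : a = w x := by rw [ha, hG, D9 hw hx0, homExt_sphere w hx]
  have ha0 : 0 ≤ a := haw ▸ hpos x hx
  have haB : a ≤ B := haw ▸ hB x hx
  set Gt := G - a • x with hGt
  have hxx : ⟪x, x⟫ = 1 := by
    rw [real_inner_self_eq_norm_sq, mem_sphere_norm hx]; norm_num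
  have htan : ⟪Gt, x⟫ = 0 := by
    rw [hGt, inner_sub_left, real_inner_smul_left, hxx, mul_one, ha, sub_self]
  have hGtB : ‖Gt‖ ≤ 2 * B := by
    rcases eq_or_ne Gt 0 with h0 | h0
    · rw [h0, norm_zero]; positivity
    · set vt := ‖Gt‖⁻¹ • Gt with hvtdef
      have hGtn : ‖Gt‖ ≠ 0 := norm_ne_zero_iff.2 h0
      have hvt1 : ‖vt‖ = 1 := by
        rw [hvtdef, norm_smul, norm_inv, norm_norm, inv_mul_cancel₀ hGtn]
      have hvtt : ⟪vt, x⟫ = 0 := by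
        rw [hvtdef, real_inner_smul_left, htan, mul_zero]
      obtain ⟨q', hq, hq2, hq'eq⟩ := line_deriv2 hw hx hvtt hvt1
      have hmono : Monotone q' := by
        apply monotone_of_deriv_nonneg
        · intro s; exact (hq2 s).differentiableAt
        · intro s
          rw [(hq2 s).deriv]
          exact psd_shell hw hcvx (add_tangent_ne_zero hx hvtt hvt1 s) vt
      obtain ⟨ξ, hξ, hslope⟩ := exists_hasDerivAt_eq_slope
        (fun s => homExt w (x + s • vt)) q' one_pos
        (fun s _ => (hq s).continuousAt.continuousWithinAt) (fun s _ => hq s)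
      have hq'0 : q' 0 ≤ q' ξ := hmono (le_of_lt hξ.1)
      have hval : q' 0 = ‖Gt‖ := by
        have h00 : x + (0:ℝ) • vt = x := by simp
        rw [hq'eq 0, h00, ← hG]
        have hsplit : ⟪vt, G⟫ = ⟪vt, Gt⟫ + a * ⟪vt, x⟫ := by
          rw [← real_inner_smul_right, ← inner_add_right]
          congr 1
          rw [hGt]; abel
        rw [hsplit, hvtt, mul_zero, add_zero, hvtdef, real_inner_smul_left,
          real_inner_self_eq_norm_sq, sq]
        field_simp
      -- upper bound q' ξ via values
      have hupper : homExt w (x + (1:ℝ) • vt) - homExt w (x + (0:ℝ) • vt) ≤ 2 * B - 0 := by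
        have h1 : homExt w (x + (1:ℝ) • vt) ≤ 2 * B := by
          have hne1 := add_tangent_ne_zero hx hvtt hvt1 1
          have hmem := smul_inv_norm_mem_sphere hne1
          have : homExt w (x + (1:ℝ) • vt) = ‖x + (1:ℝ) • vt‖ * w (‖x + (1:ℝ) • vt‖⁻¹ • (x + (1:ℝ) • vt)) := rfl
          rw [this, norm_add_tangent hx hvtt hvt1 1]
          have hs2 : Real.sqrt (1 + 1 ^ 2) ≤ 2 := by
            rw [show (1:ℝ) + 1 ^ 2 = 2 by norm_num]
            have : (2:ℝ) ≤ 2 ^ 2 := by norm_num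
            calc Real.sqrt 2 ≤ Real.sqrt (2 ^ 2) := Real.sqrt_le_sqrt this
            _ = 2 := by rw [Real.sqrt_sq]; norm_num
          have hwb := hB _ hmem
          have hwp := hpos _ hmem
          rw [norm_add_tangent hx hvtt hvt1 1] at hmem hwb hwp
          have hmm := mul_le_mul_of_nonneg_right hs2 hwp
          linarith
        have h2 : 0 ≤ homExt w (x + (0:ℝ) • vt) := by
          rw [show x + (0:ℝ) • vt = x by simp, homExt_sphere w hx]
          exact hpos x hx
        linarith
      have : q' ξ = homExt w (x + (1:ℝ) • vt) - homExt w (x + (0:ℝ) • vt) := by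
        rw [hslope]; simp
      rw [this] at hq'0
      rw [← hval]
      linarith
  have hdecomp : G = a • x + Gt := by rw [hGt]; abel
  calc ‖G‖ = ‖a • x + Gt‖ := by rw [← hdecomp]
  _ ≤ ‖a • x‖ + ‖Gt‖ := norm_add_le _ _
  _ ≤ B + 2 * B := by
      apply add_le_add _ hGtB
      rw [norm_smul, mem_sphere_norm hx, mul_one, Real.norm_eq_abs, abs_of_nonneg ha0]
      exact haB
  _ = 3 * B := by ring

/-- Lipschitz bound for `w` on the sphere -/
lemma lip_sphere (hw : ContDiffOn ℝ (⊤ : ℕ∞) (homExt w) {(0:Euc n)}ᶜ) (hcvx : WPosDef w)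
    {B : ℝ} (hpos : ∀ y ∈ sphere (0 : Euc n) 1, 0 ≤ w y)
    (hB : ∀ y ∈ sphere (0 : Euc n) 1, w y ≤ B)
    {x y : Euc n} (hx : x ∈ sphere (0 : Euc n) 1) (hy : y ∈ sphere (0 : Euc n) 1) :
    |w y - w x| ≤ 6 * B * ‖y - x‖ := by
  have hB0 : 0 ≤ B := le_trans (hpos x hx) (hB x hx)
  rcases le_or_gt (2⁻¹ : ℝ) ‖y - x‖ with hfar | hclose
  · have h1 : |w y - w x| ≤ 2 * B := by
      have := hpos x hx; have := hB x hx; have := hpos y hy; have := hB y hy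
      rw [abs_le]; constructor <;> linarith
    calc |w y - w x| ≤ 2 * B := h1
    _ ≤ 6 * B * 2⁻¹ := by linarith
    _ ≤ 6 * B * ‖y - x‖ := by
        apply mul_le_mul_of_nonneg_left hfar; positivity
  · -- use the MVT on the ball around x of radius 1/2
    set s : Set (Euc n) := Metric.ball x 2⁻¹ with hs
    have hs0 : ∀ z ∈ s, z ≠ 0 := by
      intro z hz h0
      rw [hs, Metric.mem_ball, h0] at hz
      have : dist (0 : Euc n) x = 1 := by
        rw [dist_comm, dist_zero_right, mem_sphere_norm hx]
      rw [this] at hz; norm_num at hz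
    have hdiff : ∀ z ∈ s, DifferentiableAt ℝ (homExt w) z := fun z hz => D2 hw (hs0 z hz)
    have hfd : ∀ z ∈ s, ‖fderiv ℝ (homExt w) z‖ ≤ 3 * B := by
      intro z hz
      have hz0 := hs0 z hz
      have hnorm : ‖fderiv ℝ (homExt w) z‖ = ‖gradient (homExt w) z‖ := by
        rw [gradient]
        rw [LinearIsometryEquiv.norm_map]
      rw [hnorm]
      have hzh := smul_inv_norm_mem_sphere hz0
      have h6 : gradient (homExt w) z = gradient (homExt w) (‖z‖⁻¹ • z) := by
        have hnz : ‖z‖ ≠ 0 := norm_ne_zero_iff.2 hz0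
        have := D6 hw (c := ‖z‖) (norm_pos_iff.2 hz0) (smul_ne_zero (inv_ne_zero hnz) hz0)
        rw [smul_smul, mul_inv_cancel₀ hnz, one_smul] at this
        exact this
      rw [h6]
      exact grad_bound hw hcvx hpos hB hzh
    have hxy : x ∈ s := by rw [hs]; exact Metric.mem_ball_self (by norm_num)
    have hyy : y ∈ s := by
      rw [hs, Metric.mem_ball, dist_eq_norm]
      exact hclose
    have := Convex.norm_image_sub_le_of_norm_fderiv_le hdiff hfd (convex_ball x 2⁻¹) hxy hyy
    rw [homExt_sphere w hx, homExt_sphere w hy] at this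
    calc |w y - w x| = ‖w y - w x‖ := (Real.norm_eq_abs _).symm
    _ ≤ 3 * B * ‖y - x‖ := this
    _ ≤ 6 * B * ‖y - x‖ := by nlinarith [norm_nonneg (y - x)]

end Lip

section Extremum
variable {w : Euc n → ℝ}

lemma contOn_sphere₀ {f : Euc n → ℝ} (h : ContDiffOn ℝ (⊤ : ℕ∞) (zeroExt f) {(0 : Euc n)}ᶜ) :
    ContinuousOn f (sphere (0 : Euc n) 1) := by
  have hsub : sphere (0 : Euc n) 1 ⊆ {(0 : Euc n)}ᶜ := by
    intro x hx h0
    simp only [Set.mem_singleton_iff] at h0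
    rw [h0] at hx
    simp at hx
  exact ((h.continuousOn).mono hsub).congr (fun x hx => (zeroExt_sphere f hx).symm)

lemma exists_min_sphere (hc : ContinuousOn w (sphere (0 : Euc n) 1)) :
    ∃ x ∈ sphere (0 : Euc n) 1, (∀ y ∈ sphere (0 : Euc n) 1, w x ≤ w y) ∧
      w x = ⨅ z : sphere (0 : Euc n) 1, w (z : Euc n) := by
  obtain ⟨x, hx, hmin⟩ := sphere_compact.exists_isMinOn sphere_nonempty' hc
  haveI : Nonempty (sphere (0 : Euc n) 1) := ⟨⟨x, hx⟩⟩
  have hmin' : ∀ y ∈ sphere (0 : Euc n) 1, w x ≤ w y := fun y hy => hmin hy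
  have hbdd : BddBelow (Set.range fun z : sphere (0 : Euc n) 1 => w (z : Euc n)) := by
    refine ⟨w x, ?_⟩
    rintro r ⟨z, rfl⟩
    exact hmin' z z.2
  refine ⟨x, hx, hmin', le_antisymm ?_ ?_⟩
  · exact le_ciInf fun z => hmin' z z.2
  · exact ciInf_le hbdd ⟨x, hx⟩

lemma exists_max_sphere (hc : ContinuousOn w (sphere (0 : Euc n) 1)) :
    ∃ x ∈ sphere (0 : Euc n) 1, (∀ y ∈ sphere (0 : Euc n) 1, w y ≤ w x) ∧
      w x = ⨆ z : sphere (0 : Euc n) 1, w (z : Euc n) := by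
  obtain ⟨x, hx, hmax⟩ := sphere_compact.exists_isMaxOn sphere_nonempty' hc
  haveI : Nonempty (sphere (0 : Euc n) 1) := ⟨⟨x, hx⟩⟩
  have hmax' : ∀ y ∈ sphere (0 : Euc n) 1, w y ≤ w x := fun y hy => hmax hy
  have hbdd : BddAbove (Set.range fun z : sphere (0 : Euc n) 1 => w (z : Euc n)) := by
    refine ⟨w x, ?_⟩
    rintro r ⟨z, rfl⟩
    exact hmax' z z.2
  refine ⟨x, hx, hmax', le_antisymm ?_ ?_⟩
  · exact le_ciSup hbdd ⟨x, hx⟩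
  · exact ciSup_le fun z => hmax' z z.2

/-- continuity of the infimum over the sphere of an equi-Lipschitz family -/
lemma cont_inf {U : ℝ → Euc n → ℝ} {I : Set ℝ} {L : ℝ} (hL : 0 < L)
    (hUc : ∀ r ∈ I, ContinuousOn (U r) (sphere (0 : Euc n) 1))
    (hcont : ∀ x ∈ sphere (0 : Euc n) 1, ContinuousOn (fun r => U r x) I)
    (hlip : ∀ r ∈ I, ∀ x ∈ sphere (0 : Euc n) 1, ∀ y ∈ sphere (0 : Euc n) 1,
      |U r y - U r x| ≤ L * ‖y - x‖) :
    ContinuousOn (fun r => ⨅ x : sphere (0 : Euc n) 1, U r (x : Euc n)) I := by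
  rw [Metric.continuousOn_iff]
  intro τ hτ ε hε
  set r0 : ℝ := ε / (4 * L) with hr0
  have hr0pos : 0 < r0 := by positivity
  -- finite subcover
  obtain ⟨b', hb'sub, hb'fin, hb'cov⟩ := sphere_compact.elim_finite_subcover_image
    (b := sphere (0 : Euc n) 1) (c := fun z => Metric.ball z r0)
    (fun i _ => Metric.isOpen_ball)
    (by intro z hz
        simp only [Set.mem_iUnion]
        exact ⟨z, hz, Metric.mem_ball_self hr0pos⟩)
  classical
  set t : Finset (Euc n) := hb'fin.toFinset with htdef
  have htsub : ∀ z ∈ t, z ∈ sphere (0 : Euc n) 1 := by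
    intro z hz
    rw [htdef, Set.Finite.mem_toFinset] at hz
    exact hb'sub hz
  have htcov : ∀ z ∈ sphere (0 : Euc n) 1, ∃ i ∈ t, z ∈ Metric.ball i r0 := by
    intro z hz
    have := hb'cov hz
    simp only [Set.mem_iUnion] at this
    obtain ⟨i, hi, hmem⟩ := this
    exact ⟨i, by rw [htdef, Set.Finite.mem_toFinset]; exact hi, hmem⟩
  have htne : t.Nonempty := by
    obtain ⟨z, hz⟩ := sphere_nonempty' (n := n)
    obtain ⟨i, hi, _⟩ := htcov z hz
    exact ⟨i, hi⟩
  set φ : ℝ → ℝ := fun r => t.inf' htne (fun z => U r z) with hφ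
  have hφcont : ContinuousWithinAt φ I τ := by
    have h0 := ContinuousWithinAt.finset_inf' (f := fun i (r : ℝ) => U r i)
      htne (fun i hi => hcont i (htsub i hi) τ hτ)
    have hfun : φ = t.inf' htne fun i r => U r i := by
      funext r
      rw [hφ]
      simp [Finset.inf'_apply]
    rw [hfun]
    exact h0
  set m : ℝ → ℝ := fun r => ⨅ x : sphere (0 : Euc n) 1, U r (x : Euc n) with hm
  have happrox : ∀ r ∈ I, m r ≤ φ r ∧ φ r ≤ m r + ε / 4 := by
    intro r hr
    obtain ⟨xr, hxr, hminr, hmr⟩ := exists_min_sphere (hUc r hr)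
    have hbdd : BddBelow (Set.range fun z : sphere (0 : Euc n) 1 => U r (z : Euc n)) := by
      refine ⟨U r xr, ?_⟩
      rintro ρ ⟨z, rfl⟩
      exact hminr z z.2
    constructor
    · obtain ⟨i, hi, hieq⟩ := Finset.exists_mem_eq_inf' htne (fun z => U r z)
      have hφr : φ r = U r i := hieq
      rw [hφr]
      exact ciInf_le hbdd ⟨i, htsub i hi⟩
    · obtain ⟨i, hi, hmem⟩ := htcov xr hxr
      have h1 : φ r ≤ U r i := Finset.inf'_le _ hi
      have h2 : |U r i - U r xr| ≤ L * ‖i - xr‖ := by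
        have := hlip r hr xr hxr i (htsub i hi)
        exact this
      have h3 : ‖i - xr‖ < r0 := by
        rw [Metric.mem_ball, dist_eq_norm] at hmem
        rw [show i - xr = -(xr - i) by abel, norm_neg]
        exact hmem
      have h4 : L * ‖i - xr‖ ≤ L * r0 := mul_le_mul_of_nonneg_left h3.le hL.le
      have h5 : L * r0 = ε / 4 := by
        rw [hr0]; field_simp
      have h6 : U r i ≤ U r xr + ε / 4 := by
        have h7 := (abs_le.mp h2).2
        linarith
      have hmm : m r = U r xr := hmr.symm
      have hφle : φ r ≤ U r i := h1
      rw [hmm]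
      linarith
  -- use continuity of φ
  rw [Metric.continuousWithinAt_iff] at hφcont
  obtain ⟨δ, hδ, hφδ⟩ := hφcont (ε / 4) (by positivity)
  refine ⟨δ, hδ, ?_⟩
  intro σ hσ hσδ
  have h1 := happrox σ hσ
  have h2 := happrox τ hτ
  have h3 := hφδ hσ hσδ
  rw [Real.dist_eq] at h3 ⊢
  rw [abs_lt] at h3 ⊢
  obtain ⟨h3a, h3b⟩ := h3
  constructor <;> linarith [h1.1, h1.2, h2.1, h2.2]

/-- continuity of the supremum over the sphere of an equi-Lipschitz family -/
lemma cont_sup {U : ℝ → Euc n → ℝ} {I : Set ℝ} {L : ℝ} (hL : 0 < L)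
    (hUc : ∀ r ∈ I, ContinuousOn (U r) (sphere (0 : Euc n) 1))
    (hcont : ∀ x ∈ sphere (0 : Euc n) 1, ContinuousOn (fun r => U r x) I)
    (hlip : ∀ r ∈ I, ∀ x ∈ sphere (0 : Euc n) 1, ∀ y ∈ sphere (0 : Euc n) 1,
      |U r y - U r x| ≤ L * ‖y - x‖) :
    ContinuousOn (fun r => ⨆ x : sphere (0 : Euc n) 1, U r (x : Euc n)) I := by
  have hneg := cont_inf (U := fun r x => -U r x) (I := I) hL
    (fun r hr => (hUc r hr).neg)
    (fun x hx => (hcont x hx).neg)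
    (fun r hr x hx y hy => by
      rw [show -U r y - -U r x = -(U r y - U r x) by ring, abs_neg]
      exact hlip r hr x hx y hy)
  apply (hneg.neg).congr
  intro r hr
  -- show ⨆ U = -(⨅ -U) for r ∈ I
  obtain ⟨x', hx', hminx', heq'⟩ := exists_min_sphere (w := fun y => -U r y) ((hUc r hr).neg)
  haveI : Nonempty (sphere (0 : Euc n) 1) := ⟨⟨x', hx'⟩⟩
  have hmax' : ∀ y ∈ sphere (0 : Euc n) 1, U r y ≤ U r x' := by
    intro y hy
    have := hminx' y hy
    simpa using this
  have hbdd : BddAbove (Set.range fun z : sphere (0 : Euc n) 1 => U r (z : Euc n)) := by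
    refine ⟨U r x', ?_⟩
    rintro ρ ⟨z, rfl⟩
    exact hmax' z z.2
  have h1 : (⨆ x : sphere (0 : Euc n) 1, U r (x : Euc n)) = U r x' :=
    le_antisymm (ciSup_le fun z => hmax' z z.2) (le_ciSup hbdd ⟨x', hx'⟩)
  have h2 : -(⨅ x : sphere (0 : Euc n) 1, -U r (x : Euc n)) = U r x' := by
    rw [← heq']
    ring
  show (⨆ x : sphere (0 : Euc n) 1, U r (x : Euc n))
      = -(⨅ x : sphere (0 : Euc n) 1, -U r (x : Euc n))
  rw [h1, h2]

end Extremum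

section TimeTools

/-- if `g` has positive derivative at `τ > 0`, some earlier value is smaller -/
lemma exists_smaller_before {g : ℝ → ℝ} {τ D : ℝ} (hτ : 0 < τ)
    (hg : HasDerivAt g D τ) (hD : 0 < D) : ∃ s, 0 ≤ s ∧ s < τ ∧ g s < g τ := by
  have hslope := hasDerivAt_iff_tendsto_slope.mp hg
  have hev : ∀ᶠ s in nhdsWithin τ {τ}ᶜ, 0 < slope g τ s :=
    hslope.eventually_const_lt hD
  have hsub : nhdsWithin τ (Set.Iio τ) ≤ nhdsWithin τ {τ}ᶜ :=
    nhdsWithin_mono τ (fun y hy => ne_of_lt hy)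
  have hev2 : ∀ᶠ s in nhdsWithin τ (Set.Iio τ), 0 < slope g τ s := hsub hev
  have hmem : Set.Ioo 0 τ ∈ nhdsWithin τ (Set.Iio τ) :=
    Ioo_mem_nhdsLT_of_mem ⟨hτ, le_refl τ⟩
  have hboth := hev2.and (Filter.eventually_of_mem hmem (fun s hs => hs))
  obtain ⟨s, hs1, hs2⟩ := hboth.exists
  refine ⟨s, le_of_lt hs2.1, hs2.2, ?_⟩
  rw [slope_def_field] at hs1
  have hlt : s - τ < 0 := by linarith [hs2.2]
  by_contra hge
  push_neg at hge
  rcases div_pos_iff.mp hs1 with ⟨ha, hb⟩ | ⟨ha, hb⟩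
  · linarith
  · linarith

/-- if `g` has negative derivative at `τ > 0`, some earlier value is larger -/
lemma exists_larger_before {g : ℝ → ℝ} {τ D : ℝ} (hτ : 0 < τ)
    (hg : HasDerivAt g D τ) (hD : D < 0) : ∃ s, 0 ≤ s ∧ s < τ ∧ g τ < g s := by
  obtain ⟨s, h1, h2, h3⟩ := exists_smaller_before hτ hg.neg (by linarith)
  exact ⟨s, h1, h2, by simp only [Pi.neg_apply] at h3; linarith⟩

/-- anti-monotonicity of `rpow` with negative exponent in the base -/
lemma rpow_neg_anti {a b β : ℝ} (hβ : 0 < β) (ha : 0 < a) (hab : a ≤ b) :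
    b ^ (-β) ≤ a ^ (-β) := by
  have hb : 0 < b := lt_of_lt_of_le ha hab
  rw [Real.rpow_neg ha.le, Real.rpow_neg hb.le]
  have h1 : a ^ β ≤ b ^ β := Real.rpow_le_rpow ha.le hab hβ.le
  have h2 : 0 < a ^ β := Real.rpow_pos_of_pos ha β
  exact inv_anti₀ h2 h1

/-- key quantitative bound at a minimum point -/
lemma Ebound_min (nn : ℕ) {fx uv σ F ηm ητ α β : ℝ}
    (hfx : 0 < fx) (hfF : fx ≤ F) (huv : 0 < uv) (hσl : uv ^ nn ≤ σ)
    (hβ : 0 < β) (hp : 0 < α - (nn : ℝ) * β - 1)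
    (hK : uv < (ηm / F) ^ (1 / (α - (nn : ℝ) * β - 1)))
    (hηm : 0 < ηm) (hη : ηm ≤ ητ) :
    fx * uv ^ α * σ ^ (-β) < ητ * uv := by
  have hF : 0 < F := lt_of_lt_of_le hfx hfF
  set p := α - (nn : ℝ) * β - 1 with hpdef
  have hσpos : 0 < σ := lt_of_lt_of_le (pow_pos huv nn) hσl
  have h1 : σ ^ (-β) ≤ (uv ^ nn) ^ (-β) := rpow_neg_anti hβ (pow_pos huv nn) hσl
  have h2 : (uv ^ nn : ℝ) ^ (-β) = uv ^ (-((nn : ℝ) * β)) := by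
    rw [← Real.rpow_natCast uv nn, ← Real.rpow_mul huv.le]
    ring_nf
  have h3 : uv ^ α * uv ^ (-((nn : ℝ) * β)) = uv ^ (1 + p) := by
    rw [← Real.rpow_add huv]
    congr 1
    rw [hpdef]; ring
  have h4 : uv ^ ((1 : ℝ) + p) = uv * uv ^ p := by
    rw [Real.rpow_add huv, Real.rpow_one]
  have h5 : uv ^ p < ηm / F := by
    have := Real.rpow_lt_rpow huv.le hK hp
    rwa [← Real.rpow_mul (by positivity : (0:ℝ) ≤ ηm / F), one_div,
      inv_mul_cancel₀ (ne_of_gt hp), Real.rpow_one] at this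
  have h6 : F * uv ^ p < ηm := by
    rw [lt_div_iff₀ hF] at h5
    linarith
  have hual : 0 < uv ^ α := Real.rpow_pos_of_pos huv α
  have husp : 0 < uv ^ p := Real.rpow_pos_of_pos huv p
  calc fx * uv ^ α * σ ^ (-β) = fx * (uv ^ α * σ ^ (-β)) := by ring
  _ ≤ fx * (uv ^ α * (uv ^ nn) ^ (-β)) :=
        mul_le_mul_of_nonneg_left (mul_le_mul_of_nonneg_left h1 hual.le) hfx.le
  _ ≤ F * (uv ^ α * (uv ^ nn) ^ (-β)) :=
        mul_le_mul_of_nonneg_right hfF (by positivity)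
  _ = F * (uv * uv ^ p) := by rw [h2, h3]; norm_num [h4]
  _ = (F * uv ^ p) * uv := by ring
  _ < ηm * uv := by
        apply mul_lt_mul_of_pos_right h6 huv
  _ ≤ ητ * uv := mul_le_mul_of_nonneg_right hη huv.le

/-- key quantitative bound at a maximum point -/
lemma Ebound_max (nn : ℕ) {fx uv σ Fi ηM ητ α β : ℝ}
    (hfx : 0 < fx) (hfF : Fi ≤ fx) (hFi : 0 < Fi) (huv : 0 < uv)
    (hσu : σ ≤ uv ^ nn) (hσpos : 0 < σ)
    (hβ : 0 < β) (hp : 0 < α - (nn : ℝ) * β - 1)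
    (hK : (ηM / Fi) ^ (1 / (α - (nn : ℝ) * β - 1)) < uv)
    (hηM : 0 < ηM) (hη : ητ ≤ ηM) :
    ητ * uv < fx * uv ^ α * σ ^ (-β) := by
  set p := α - (nn : ℝ) * β - 1 with hpdef
  have h1 : (uv ^ nn : ℝ) ^ (-β) ≤ σ ^ (-β) := rpow_neg_anti hβ hσpos hσu
  have h2 : (uv ^ nn : ℝ) ^ (-β) = uv ^ (-((nn : ℝ) * β)) := by
    rw [← Real.rpow_natCast uv nn, ← Real.rpow_mul huv.le]
    ring_nf
  have h3 : uv ^ α * uv ^ (-((nn : ℝ) * β)) = uv ^ (1 + p) := by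
    rw [← Real.rpow_add huv]
    congr 1
    rw [hpdef]; ring
  have h4 : uv ^ ((1 : ℝ) + p) = uv * uv ^ p := by
    rw [Real.rpow_add huv, Real.rpow_one]
  have h5 : ηM / Fi < uv ^ p := by
    have hbase : (0:ℝ) ≤ (ηM / Fi) ^ (1 / p) := Real.rpow_nonneg (by positivity) _
    have := Real.rpow_lt_rpow hbase hK hp
    rwa [← Real.rpow_mul (by positivity : (0:ℝ) ≤ ηM / Fi), one_div,
      inv_mul_cancel₀ (ne_of_gt hp), Real.rpow_one] at this
  have h6 : ηM < Fi * uv ^ p := by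
    rw [div_lt_iff₀ hFi] at h5
    linarith
  have hual : 0 < uv ^ α := Real.rpow_pos_of_pos huv α
  calc ητ * uv ≤ ηM * uv := mul_le_mul_of_nonneg_right hη huv.le
  _ < (Fi * uv ^ p) * uv := mul_lt_mul_of_pos_right h6 huv
  _ = Fi * (uv ^ α * (uv ^ nn) ^ (-β)) := by rw [h2, h3]; rw [h4]; ring
  _ ≤ fx * (uv ^ α * (uv ^ nn) ^ (-β)) :=
        mul_le_mul_of_nonneg_right hfF (by positivity)
  _ = fx * uv ^ α * (uv ^ nn) ^ (-β) := by ring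
  _ ≤ fx * uv ^ α * σ ^ (-β) := by
        apply mul_le_mul_of_nonneg_left h1
        positivity

/-- pointwise Grönwall-type bound -/
lemma gronwall_pt {g : ℝ → ℝ} {c s t : ℝ} (hst : s ≤ t)
    (hd : ∀ r ∈ Set.Icc s t, ∃ D : ℝ, HasDerivAt g D r ∧ D ≤ c * g r) :
    g t ≤ g s * Real.exp (c * (t - s)) := by
  set ψ : ℝ → ℝ := fun r => g r * Real.exp (-c * r) with hψ
  have hψd : ∀ r ∈ Set.Icc s t, ∃ D', HasDerivAt ψ D' r ∧ D' ≤ 0 := by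
    intro r hr
    obtain ⟨D, hD, hDle⟩ := hd r hr
    have hexp : HasDerivAt (fun r : ℝ => Real.exp (-c * r)) (-c * Real.exp (-c * r)) r := by
      have h1 : HasDerivAt (fun r : ℝ => -c * r) (-c) r := by
        simpa using (hasDerivAt_id r).const_mul (-c)
      simpa [mul_comm] using h1.exp
    refine ⟨D * Real.exp (-c * r) + g r * (-c * Real.exp (-c * r)), hD.mul hexp, ?_⟩
    have hepos : 0 < Real.exp (-c * r) := Real.exp_pos _
    nlinarith
  have hanti : AntitoneOn ψ (Set.Icc s t) := by
    apply antitoneOn_of_deriv_nonpos (convex_Icc s t)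
    · intro r hr
      obtain ⟨D', hD', _⟩ := hψd r hr
      exact hD'.continuousAt.continuousWithinAt
    · intro r hr
      rw [interior_Icc] at hr
      obtain ⟨D', hD', _⟩ := hψd r (Set.mem_Icc_of_Ioo hr)
      exact hD'.differentiableAt.differentiableWithinAt
    · intro r hr
      rw [interior_Icc] at hr
      obtain ⟨D', hD', hle⟩ := hψd r (Set.mem_Icc_of_Ioo hr)
      rw [hD'.deriv]
      exact hle
  have h1 : ψ t ≤ ψ s := hanti (Set.left_mem_Icc.2 hst) (Set.right_mem_Icc.2 hst) hst
  have h2 : g t * Real.exp (-c * t) ≤ g s * Real.exp (-c * s) := h1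
  have h3 := mul_le_mul_of_nonneg_right h2 (Real.exp_pos (c * t)).le
  have he1 : Real.exp (-c * t) * Real.exp (c * t) = 1 := by
    rw [← Real.exp_add]; norm_num
  have he2 : Real.exp (-c * s) * Real.exp (c * t) = Real.exp (c * (t - s)) := by
    rw [← Real.exp_add]; congr 1; ring
  calc g t = g t * (Real.exp (-c * t) * Real.exp (c * t)) := by rw [he1, mul_one]
  _ = g t * Real.exp (-c * t) * Real.exp (c * t) := by ring
  _ ≤ g s * Real.exp (-c * s) * Real.exp (c * t) := h3
  _ = g s * Real.exp (c * (t - s)) := by rw [mul_assoc, he2]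

end TimeTools
end Work

/-- `C⁰` bounds along the flow for `α > nβ + 1`:
`u_min(t) ≥ min{(η_min/max f)^{1/(α−nβ−1)}, u_min(0)}` and
`u_max(t) ≤ max{(η_max/min f)^{1/(α−nβ−1)}, u_max(0)}`. -/
theorem stmt17 (n : ℕ) (hn : 2 ≤ n) (T : ℝ) (hT : 0 < T)
    (u : ℝ → Euc n → ℝ) (f : Euc n → ℝ) (α β : ℝ)
    (hβ : 0 < β) (hα : (n : ℝ) * β + 1 < α)
    (hfpos : ∀ x ∈ sphere (0 : Euc n) 1, 0 < f x)
    (hfsm : ContDiffOn ℝ (⊤ : ℕ∞) (zeroExt f) {(0 : Euc n)}ᶜ)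
    (hupos : ∀ t ∈ Set.Ico (0 : ℝ) T, ∀ x ∈ sphere (0 : Euc n) 1, 0 < u t x)
    (husm : ∀ t ∈ Set.Ico (0 : ℝ) T, ContDiffOn ℝ (⊤ : ℕ∞) (homExt (u t)) {(0 : Euc n)}ᶜ)
    (hucvx : ∀ t ∈ Set.Ico (0 : ℝ) T, WPosDef (u t))
    (η : ℝ → ℝ) (ηmin ηmax : ℝ)
    (hηmin : 0 < ηmin)
    (hηbdd : ∀ t ∈ Set.Ico (0 : ℝ) T, ηmin ≤ η t ∧ η t ≤ ηmax)
    (hflow : ∀ t ∈ Set.Ico (0 : ℝ) T, ∀ x ∈ sphere (0 : Euc n) 1,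
      HasDerivAt (fun s => u s x)
        (-(f x * u t x ^ α * sigmaN (u t) x ^ (-β)) + η t * u t x) t) :
    ∀ t ∈ Set.Ico (0 : ℝ) T,
      (min ((ηmin / sSup (f '' sphere (0 : Euc n) 1)) ^ (1 / (α - (n : ℝ) * β - 1)))
          (⨅ x : sphere (0 : Euc n) 1, u 0 (x : Euc n))
        ≤ ⨅ x : sphere (0 : Euc n) 1, u t (x : Euc n)) ∧
      ((⨆ x : sphere (0 : Euc n) 1, u t (x : Euc n))
        ≤ max ((ηmax / sInf (f '' sphere (0 : Euc n) 1)) ^ (1 / (α - (n : ℝ) * β - 1)))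
            (⨆ x : sphere (0 : Euc n) 1, u 0 (x : Euc n))) := by
  intro t1 ht1
  obtain ⟨ht1a, ht1b⟩ := ht1
  have h0T : (0:ℝ) ∈ Set.Ico (0:ℝ) T := ⟨le_refl 0, hT⟩
  -- exponent
  have hppos : 0 < α - (n:ℝ) * β - 1 := by linarith
  -- f facts
  have hfc : ContinuousOn f (sphere (0:Euc n) 1) := Work.contOn_sphere₀ hfsm
  have himg : IsCompact (f '' sphere (0:Euc n) 1) :=
    Work.sphere_compact.image_of_continuousOn hfc
  have himgne : (f '' sphere (0:Euc n) 1).Nonempty := Work.sphere_nonempty'.image f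
  have hFmem := himg.sSup_mem himgne
  have hFimem := himg.sInf_mem himgne
  have hFpos : 0 < sSup (f '' sphere (0:Euc n) 1) := by
    obtain ⟨xF, hxF, hxFe⟩ := hFmem
    rw [← hxFe]
    exact hfpos xF hxF
  have hFipos : 0 < sInf (f '' sphere (0:Euc n) 1) := by
    obtain ⟨xF, hxF, hxFe⟩ := hFimem
    rw [← hxFe]
    exact hfpos xF hxF
  have hfleF : ∀ x ∈ sphere (0:Euc n) 1, f x ≤ sSup (f '' sphere (0:Euc n) 1) :=
    fun x hx => le_csSup himg.bddAbove (Set.mem_image_of_mem f hx)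
  have hFile : ∀ x ∈ sphere (0:Euc n) 1, sInf (f '' sphere (0:Euc n) 1) ≤ f x :=
    fun x hx => csInf_le himg.bddBelow (Set.mem_image_of_mem f hx)
  have hIco : ∀ r ∈ Set.Icc (0:ℝ) t1, r ∈ Set.Ico (0:ℝ) T :=
    fun r hr => ⟨hr.1, lt_of_le_of_lt hr.2 ht1b⟩
  set m : ℝ → ℝ := fun r => ⨅ x : sphere (0:Euc n) 1, u r (x:Euc n) with hmdef
  set M : ℝ → ℝ := fun r => ⨆ x : sphere (0:Euc n) 1, u r (x:Euc n) with hMdef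
  have hucS : ∀ r ∈ Set.Ico (0:ℝ) T, ContinuousOn (u r) (sphere (0:Euc n) 1) :=
    fun r hr => Work.contOn_sphere (husm r hr)
  have hminr : ∀ r ∈ Set.Ico (0:ℝ) T, ∃ x ∈ sphere (0:Euc n) 1,
      (∀ y ∈ sphere (0:Euc n) 1, u r x ≤ u r y) ∧ u r x = m r :=
    fun r hr => Work.exists_min_sphere (hucS r hr)
  have hmaxr : ∀ r ∈ Set.Ico (0:ℝ) T, ∃ x ∈ sphere (0:Euc n) 1,
      (∀ y ∈ sphere (0:Euc n) 1, u r y ≤ u r x) ∧ u r x = M r :=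
    fun r hr => Work.exists_max_sphere (hucS r hr)
  -- sigma positivity
  have hσpos : ∀ r ∈ Set.Ico (0:ℝ) T, ∀ x ∈ sphere (0:Euc n) 1, 0 < sigmaN (u r) x :=
    fun r hr x hx => Work.sigma_pos (husm r hr) hx
      (fun v hv hv0 => hucvx r hr x hx v hv hv0)
  -- η bounds
  have hηmaxpos : 0 < ηmax := lt_of_lt_of_le hηmin ((hηbdd 0 h0T).1.trans (hηbdd 0 h0T).2)
  -- derivative upper bound everywhere
  have hDle : ∀ r ∈ Set.Ico (0:ℝ) T, ∀ x ∈ sphere (0:Euc n) 1,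
      -(f x * u r x ^ α * sigmaN (u r) x ^ (-β)) + η r * u r x ≤ ηmax * u r x := by
    intro r hr x hx
    have hu := hupos r hr x hx
    have h1 : 0 < f x * u r x ^ α * sigmaN (u r) x ^ (-β) :=
      mul_pos (mul_pos (hfpos x hx) (Real.rpow_pos_of_pos hu α))
        (Real.rpow_pos_of_pos (hσpos r hr x hx) _)
    have h2 := mul_le_mul_of_nonneg_right (hηbdd r hr).2 hu.le
    linarith
  -- pointwise Grönwall
  have hgron : ∀ x ∈ sphere (0:Euc n) 1, ∀ s r : ℝ, 0 ≤ s → s ≤ r → r < T →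
      u r x ≤ u s x * Real.exp (ηmax * (r - s)) := by
    intro x hx s r hs hsr hrT
    apply Work.gronwall_pt hsr
    intro ρ hρ
    have hρIco : ρ ∈ Set.Ico (0:ℝ) T := ⟨le_trans hs hρ.1, lt_of_le_of_lt hρ.2 hrT⟩
    exact ⟨_, hflow ρ hρIco x hx, hDle ρ hρIco x hx⟩
  -- uniform upper bound on [0, t1]
  have hM0 : ∀ x ∈ sphere (0:Euc n) 1, u 0 x ≤ M 0 := by
    intro x hx
    obtain ⟨x0, hx0, hmax0, hMx0⟩ := hmaxr 0 h0T
    rw [← hMx0]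
    exact hmax0 x hx
  have hM0pos : 0 < M 0 := by
    obtain ⟨x0, hx0, _, hMx0⟩ := hmaxr 0 h0T
    rw [← hMx0]
    exact hupos 0 h0T x0 hx0
  set C0 : ℝ := M 0 * Real.exp (ηmax * t1) with hC0def
  have hC0pos : 0 < C0 := mul_pos hM0pos (Real.exp_pos _)
  have hC0 : ∀ r ∈ Set.Icc (0:ℝ) t1, ∀ x ∈ sphere (0:Euc n) 1, u r x ≤ C0 := by
    intro r hr x hx
    have h1 := hgron x hx 0 r (le_refl 0) hr.1 (lt_of_le_of_lt hr.2 ht1b)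
    have h2 : Real.exp (ηmax * (r - 0)) ≤ Real.exp (ηmax * t1) :=
      Real.exp_le_exp.2 (by nlinarith [hr.2, hr.1, hηmaxpos])
    have h3 : u 0 x ≤ M 0 := hM0 x hx
    have h4 : 0 < Real.exp (ηmax * (r - 0)) := Real.exp_pos _
    calc u r x ≤ u 0 x * Real.exp (ηmax * (r - 0)) := h1
    _ ≤ M 0 * Real.exp (ηmax * (r - 0)) := mul_le_mul_of_nonneg_right h3 h4.le
    _ ≤ M 0 * Real.exp (ηmax * t1) := mul_le_mul_of_nonneg_left h2 hM0pos.le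
  -- equi-Lipschitz family
  have hlip6 : ∀ r ∈ Set.Icc (0:ℝ) t1, ∀ x ∈ sphere (0:Euc n) 1,
      ∀ y ∈ sphere (0:Euc n) 1, |u r y - u r x| ≤ 6 * C0 * ‖y - x‖ := by
    intro r hr x hx y hy
    exact Work.lip_sphere (husm r (hIco r hr)) (hucvx r (hIco r hr))
      (fun z hz => (hupos r (hIco r hr) z hz).le) (fun z hz => hC0 r hr z hz) hx hy
  have htcont : ∀ x ∈ sphere (0:Euc n) 1,
      ContinuousOn (fun r => u r x) (Set.Icc (0:ℝ) t1) :=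
    fun x hx r hr => ((hflow r (hIco r hr) x hx).continuousAt).continuousWithinAt
  have hmcont : ContinuousOn m (Set.Icc (0:ℝ) t1) :=
    Work.cont_inf (by positivity : (0:ℝ) < 6 * C0)
      (fun r hr => hucS r (hIco r hr)) htcont hlip6
  have hMcont : ContinuousOn M (Set.Icc (0:ℝ) t1) :=
    Work.cont_sup (by positivity : (0:ℝ) < 6 * C0)
      (fun r hr => hucS r (hIco r hr)) htcont hlip6
  have h0mem : (0:ℝ) ∈ Set.Icc (0:ℝ) t1 := ⟨le_refl 0, ht1a⟩
  have ht1mem : t1 ∈ Set.Icc (0:ℝ) t1 := ⟨ht1a, le_refl t1⟩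
  constructor
  · -- MIN part
    by_contra hcon
    push_neg at hcon
    obtain ⟨τ, hτI, hτmin⟩ := isCompact_Icc.exists_isMinOn ⟨0, h0mem⟩ hmcont
    have hτle : m τ ≤ m t1 := isMinOn_iff.mp hτmin t1 ht1mem
    have hτlt : m τ < min ((ηmin / sSup (f '' sphere (0:Euc n) 1))
        ^ (1 / (α - (n:ℝ) * β - 1))) (m 0) := lt_of_le_of_lt hτle hcon
    have hτne : τ ≠ 0 := by
      intro h0
      rw [h0] at hτlt
      exact absurd (lt_of_lt_of_le hτlt (min_le_right _ _)) (lt_irrefl (m 0))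
    have hτpos : 0 < τ := lt_of_le_of_ne hτI.1 (Ne.symm hτne)
    have hτIco : τ ∈ Set.Ico (0:ℝ) T := hIco τ hτI
    obtain ⟨xs, hxs, hminx, hmx⟩ := hminr τ hτIco
    have huv : 0 < u τ xs := hupos τ hτIco xs hxs
    have hσl : u τ xs ^ n ≤ sigmaN (u τ) xs :=
      Work.sigma_lower (husm τ hτIco) hxs huv.le
        (fun v hv hv1 => Work.tangent_hess_min (husm τ hτIco) hxs hminx hv hv1)
    have hKlt : u τ xs < (ηmin / sSup (f '' sphere (0:Euc n) 1))
        ^ (1 / (α - (n:ℝ) * β - 1)) := by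
      rw [hmx]
      exact lt_of_lt_of_le hτlt (min_le_left _ _)
    have hE := Work.Ebound_min n (hfpos xs hxs) (hfleF xs hxs) huv hσl hβ hppos hKlt
      hηmin (hηbdd τ hτIco).1
    have hD : 0 < -(f xs * u τ xs ^ α * sigmaN (u τ) xs ^ (-β)) + η τ * u τ xs := by
      linarith
    obtain ⟨s, hs0, hsτ, hless⟩ :=
      Work.exists_smaller_before hτpos (hflow τ hτIco xs hxs) hD
    have hsI : s ∈ Set.Icc (0:ℝ) t1 := ⟨hs0, le_trans hsτ.le hτI.2⟩
    have hms : m s ≤ u s xs := by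
      obtain ⟨xm, hxm, hminxm, hmxm⟩ := hminr s (hIco s hsI)
      rw [← hmxm]
      exact hminxm xs hxs
    have hcontra : m s < m τ := by
      have := hmx
      linarith
    exact absurd (isMinOn_iff.mp hτmin s hsI) (not_le.2 hcontra)
  · -- MAX part
    by_contra hcon
    push_neg at hcon
    obtain ⟨τ, hτI, hτmax⟩ := isCompact_Icc.exists_isMaxOn ⟨0, h0mem⟩ hMcont
    have hτge : M t1 ≤ M τ := isMaxOn_iff.mp hτmax t1 ht1mem
    have hτgt : max ((ηmax / sInf (f '' sphere (0:Euc n) 1))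
        ^ (1 / (α - (n:ℝ) * β - 1))) (M 0) < M τ := lt_of_lt_of_le hcon hτge
    have hτne : τ ≠ 0 := by
      intro h0
      rw [h0] at hτgt
      exact absurd (lt_of_le_of_lt (le_max_right _ _) hτgt) (lt_irrefl (M 0))
    have hτpos : 0 < τ := lt_of_le_of_ne hτI.1 (Ne.symm hτne)
    have hτIco : τ ∈ Set.Ico (0:ℝ) T := hIco τ hτI
    obtain ⟨xs, hxs, hmaxx, hMx⟩ := hmaxr τ hτIco
    have huv : 0 < u τ xs := hupos τ hτIco xs hxs
    have hσu : sigmaN (u τ) xs ≤ u τ xs ^ n :=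
      Work.sigma_upper (husm τ hτIco) hxs
        (fun v hv => Work.psd_sphere (husm τ hτIco) (hucvx τ hτIco) hxs v)
        (fun v hv hv1 => Work.tangent_hess_max (husm τ hτIco) hxs hmaxx hv hv1)
    have hKgt : (ηmax / sInf (f '' sphere (0:Euc n) 1))
        ^ (1 / (α - (n:ℝ) * β - 1)) < u τ xs := by
      rw [hMx]
      exact lt_of_le_of_lt (le_max_left _ _) hτgt
    have hE := Work.Ebound_max n (hfpos xs hxs) (hFile xs hxs) hFipos huv hσu
      (hσpos τ hτIco xs hxs) hβ hppos hKgt hηmaxpos (hηbdd τ hτIco).2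
    have hD : -(f xs * u τ xs ^ α * sigmaN (u τ) xs ^ (-β)) + η τ * u τ xs < 0 := by
      linarith
    obtain ⟨s, hs0, hsτ, hmore⟩ :=
      Work.exists_larger_before hτpos (hflow τ hτIco xs hxs) hD
    have hsI : s ∈ Set.Icc (0:ℝ) t1 := ⟨hs0, le_trans hsτ.le hτI.2⟩
    have hms : u s xs ≤ M s := by
      obtain ⟨xm, hxm, hmaxxm, hmxm⟩ := hmaxr s (hIco s hsI)
      rw [← hmxm]
      exact hmaxxm xs hxs
    have hcontra : M τ < M s := by
      have := hMx
      linarith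
    exact absurd (isMaxOn_iff.mp hτmax s hsI) (not_le.2 hcontra)

end
end
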